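/- arXiv:1406.6578 — 11 statements merged into one kernel-verified Lean document; each statement's English description precedes it below -/
import Mathlib

section
/- Let N(E) = #{(n,k) ∈ ℕ×(ℤ∖{0}) : 4n|k| ≤ E}. Then, as E → +∞, N(E) = (E/2)·log E + O(E); in particular N(E)/(E·log E) → 1/2, i.e. the Weyl law for the Grushin cylinder has leading term (1/2)·E·log E. -/
/-!
Grouping the eigenvalues `4n|k| ≤ E` by `n` and putting `y = E / 4`, each `n ≤ y` admits exactly
`2⌊y/n⌋` values of `k`, so `N(E) = 2 ∑_{n ≤ y} ⌊y/n⌋` is twice Dirichlet's divisor summatory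
function. Removing the floors costs at most `y`, and the floor-free sum is `y · H_⌊y⌋`, which is
`y log y + O(y)` by the harmonic bounds `log y ≤ H_⌊y⌋ ≤ 1 + log y`. The limit of the ratio follows
because `E = o(E log E)`.
-/

open Filter Real Asymptotics Finset Topology

lemma natAbs_le_floor_div_iff {y : ℝ} {n : ℕ} {k : ℤ} (hn : 0 < n) (hk : k ≠ 0) :
    k.natAbs ≤ ⌊y / n⌋₊ ↔ n * |(k : ℝ)| ≤ y := by
  rw [Nat.le_floor_iff' (Int.natAbs_ne_zero.mpr hk), Nat.cast_natAbs, Int.cast_abs,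
    le_div_iff₀ (by positivity), mul_comm]

lemma card_erase_zero_Icc_neg_self (a : ℕ) : #((Icc (-a : ℤ) a).erase 0) = 2 * a := by
  rw [card_erase_of_mem (by simp), Int.card_Icc]
  omega

lemma ncard_hyperbola_eq (y : ℝ) :
    {p : ℕ × ℤ | 0 < p.1 ∧ p.2 ≠ 0 ∧ p.1 * |(p.2 : ℝ)| ≤ y}.ncard
      = 2 * ∑ n ∈ Icc 1 ⌊y⌋₊, ⌊y / n⌋₊ := by
  have hS : {p : ℕ × ℤ | 0 < p.1 ∧ p.2 ≠ 0 ∧ p.1 * |(p.2 : ℝ)| ≤ y} =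
      ↑((Icc 1 ⌊y⌋₊).biUnion fun n => {n} ×ˢ (Icc (-⌊y / n⌋₊ : ℤ) ⌊y / n⌋₊).erase 0) := by
    ext ⟨n, k⟩
    simp only [Set.mem_ofPred_eq, coe_biUnion, coe_Icc, Set.mem_Icc, Set.mem_iUnion, coe_product,
      coe_singleton, coe_erase, Set.mem_prod, Set.mem_singleton_iff, Set.mem_sdiff, exists_prop]
    constructor
    · rintro ⟨hn, hk, hle⟩
      have hk_le := (natAbs_le_floor_div_iff hn hk).mpr hle
      have hn_le : n ≤ ⌊y⌋₊ := Nat.le_floor <| (le_mul_of_one_le_right n.cast_nonneg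
        (by exact_mod_cast Int.one_le_abs hk)).trans hle
      exact ⟨n, ⟨hn, hn_le⟩, rfl, by omega, hk⟩
    · rintro ⟨n, ⟨hn, -⟩, rfl, hk_le, hk⟩
      exact ⟨hn, hk, (natAbs_le_floor_div_iff hn hk).mp (by omega)⟩
  rw [hS, Set.ncard_coe_finset, card_biUnion, mul_sum]
  · refine sum_congr rfl fun n _ => ?_
    rw [card_product, card_singleton, one_mul, card_erase_zero_Icc_neg_self]
  · intro a _ b _ hab
    exact disjoint_product.mpr (.inl (disjoint_singleton.mpr hab))

lemma abs_sum_floor_div_sub_mul_harmonic_le {y : ℝ} (hy : 0 ≤ y) :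
    |∑ n ∈ Icc 1 ⌊y⌋₊, (⌊y / n⌋₊ : ℝ) - y * harmonic ⌊y⌋₊| ≤ y := by
  have hH : y * harmonic ⌊y⌋₊ = ∑ n ∈ Icc 1 ⌊y⌋₊, y / n := by
    simp [harmonic_eq_sum_Icc, mul_sum, div_eq_mul_inv]
  calc _ = |∑ n ∈ Icc 1 ⌊y⌋₊, ((⌊y / n⌋₊ : ℝ) - y / n)| := by rw [hH, sum_sub_distrib]
    _ ≤ ∑ n ∈ Icc 1 ⌊y⌋₊, (1 : ℝ) :=
      (abs_sum_le_sum_abs _ _).trans (sum_le_sum fun n _ => Nat.abs_floor_sub_le (by positivity))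
    _ ≤ y := by simpa using Nat.floor_le hy

lemma abs_harmonic_floor_sub_log_le {y : ℝ} (hy : 1 ≤ y) :
    |(harmonic ⌊y⌋₊ : ℝ) - log y| ≤ 1 :=
  abs_le.mpr ⟨by linarith [log_le_harmonic_floor y (by linarith)],
    by linarith [harmonic_floor_le_one_add_log y hy]⟩

lemma abs_sum_floor_div_sub_mul_log_le {y : ℝ} (hy : 1 ≤ y) :
    |∑ n ∈ Icc 1 ⌊y⌋₊, (⌊y / n⌋₊ : ℝ) - y * log y| ≤ 2 * y := by
  have hy0 : 0 ≤ y := zero_le_one.trans hy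
  have hH : |y * harmonic ⌊y⌋₊ - y * log y| ≤ y := by
    rw [← mul_sub, abs_mul, abs_of_nonneg hy0]
    simpa using mul_le_mul_of_nonneg_left (abs_harmonic_floor_sub_log_le hy) hy0
  calc _ ≤ _ + _ := abs_sub_le _ (y * harmonic ⌊y⌋₊) _
    _ ≤ 2 * y := by linarith [abs_sum_floor_div_sub_mul_harmonic_le hy0]

lemma tendsto_div_mul_log_of_isBigO {f : ℝ → ℝ} {c : ℝ}
    (h : (fun x => f x - c * (x * log x)) =O[atTop] fun x => x) :
    Tendsto (fun x => f x / (x * log x)) atTop (𝓝 c) := by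
  have hlo : (fun x : ℝ => x) =o[atTop] fun x => x * log x := by
    simpa using (isBigO_refl (fun x : ℝ => x) atTop).mul_isLittleO
      (isLittleO_const_log_atTop (c := 1))
  have h0 := (h.trans_isLittleO hlo).tendsto_div_nhds_zero.add_const c
  rw [zero_add] at h0
  refine h0.congr' ?_
  filter_upwards [eventually_gt_atTop 1] with x hx
  have : x * log x ≠ 0 := (mul_pos (by linarith) (log_pos hx)).ne'
  rw [sub_div, mul_div_cancel_right₀ _ this, sub_add_cancel]

lemma ncard_grushin_eq (E : ℝ) :
    {p : ℕ × ℤ | 0 < p.1 ∧ p.2 ≠ 0 ∧ 4 * p.1 * |(p.2 : ℝ)| ≤ E}.ncard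
      = 2 * ∑ n ∈ Icc 1 ⌊E / 4⌋₊, ⌊E / 4 / n⌋₊ := by
  rw [← ncard_hyperbola_eq]
  simp_rw [mul_assoc, ← le_div_iff₀' (four_pos : (0 : ℝ) < 4)]

lemma abs_two_mul_sum_floor_div_sub_le {E : ℝ} (hE : 4 ≤ E) :
    |2 * ∑ n ∈ Icc 1 ⌊E / 4⌋₊, (⌊E / 4 / n⌋₊ : ℝ) - E / 2 * log E| ≤ 3 * E := by
  set S := ∑ n ∈ Icc 1 ⌊E / 4⌋₊, (⌊E / 4 / n⌋₊ : ℝ)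
  have hS : |S - E / 4 * log (E / 4)| ≤ 2 * (E / 4) :=
    abs_sum_floor_div_sub_mul_log_le (by linarith)
  have hlog4 : E / 2 * log 4 ≤ E / 2 * 3 := by
    gcongr
    linarith [log_le_sub_one_of_pos (show (0 : ℝ) < 4 by norm_num)]
  have hlog4_nonneg : 0 ≤ E / 2 * log 4 := by positivity
  have hsplit : 2 * S - E / 2 * log E = 2 * (S - E / 4 * log (E / 4)) - E / 2 * log 4 := by
    rw [log_div (by positivity) (by norm_num)]
    ring
  rw [hsplit]
  calc _ ≤ |2 * (S - E / 4 * log (E / 4))| + |E / 2 * log 4| := abs_sub _ _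
    _ ≤ 3 * E := by
      rw [abs_mul, abs_two, abs_of_nonneg hlog4_nonneg]
      linarith

/-- Weyl's law for the Grushin cylinder, leading term:
`N(E) = (E/2)·log E + O(E)` as `E → +∞`, and `N(E)/(E log E) → 1/2`. -/
theorem grushin_cylinder_weyl_leading_term
    (N : ℝ → ℝ)
    (hN : ∀ E : ℝ, N E =
      Set.ncard {p : ℕ × ℤ | 0 < p.1 ∧ p.2 ≠ 0 ∧ (4 * p.1 * |(p.2 : ℝ)| ≤ E)}) :
    (fun E : ℝ => N E - E / 2 * Real.log E) =O[atTop] (fun E : ℝ => E) ∧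
      Tendsto (fun E : ℝ => N E / (E * Real.log E)) atTop (nhds (1 / 2)) := by
  have hO : (fun E : ℝ => N E - E / 2 * Real.log E) =O[atTop] (fun E : ℝ => E) := by
    refine IsBigO.of_bound 3 ?_
    filter_upwards [eventually_ge_atTop 4] with E hE
    rw [hN, ncard_grushin_eq, Real.norm_eq_abs, Real.norm_of_nonneg (by linarith)]
    push_cast
    exact abs_two_mul_sum_floor_div_sub_le hE
  exact ⟨hO, tendsto_div_mul_log_of_isBigO (hO.congr_left fun E => by ring)⟩
end

section
/- Let k be a nonzero integer and n a positive integer. Define u : (0,∞) → ℝ by u(x) = x²·e^{−|k|x²/2}·∑_{j=0}^{n−1} (−1)^j · binom(n, n−1−j) · (|k|x²)^j / j!. Then for every x > 0 one has u''(x) − u'(x)/x − k²x²·u(x) = −4n|k|·u(x), and moreover ∫₀^∞ u(x)²·x^{−1} dx < ∞. -/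
/-!
Write `a = |k|` and `u = P(x) e^{-a x²/2}` with `P(x) = x² L(a x²)`, `L = L¹_{n-1}`.
Conjugating by the Gaussian removes the potential: `u'' - u'/x - a²x² u` equals
`(P'' - P'/x - 2a x P') e^{-a x²/2}`. In the variable `z = a x²` the operator
`x P'' - P' - 2a x² P'` becomes `4a x³ (z L'' + (2 - z) L' - L)`, which is `-4na x P` by
Laguerre's equation `z L'' + (α + 1 - z) L' + m L = 0`; the latter is a two-term recurrence for
the coefficients of `L`, i.e. the identity `(k + 1) C(N, k + 1) = (N - k) C(N, k)`.
Square-integrability holds because `u² / x` is a polynomial times `e^{-a x²}`.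
-/

open Real MeasureTheory Polynomial

theorem Nat.cast_choose_succ_mul {R : Type*} [CommRing R] (N k : ℕ) :
    ((k : R) + 1) * N.choose (k + 1) = ((N : R) - k) * N.choose k := by
  rcases le_or_gt k N with hk | hk
  · have h := congrArg (Nat.cast : ℕ → R) (Nat.choose_succ_right_eq N k)
    push_cast [Nat.cast_sub hk] at h
    linear_combination h
  · simp [Nat.choose_eq_zero_of_lt hk, Nat.choose_eq_zero_of_lt (Nat.lt_succ_of_lt hk)]

namespace Polynomial

noncomputable def genLaguerre (α m : ℕ) : ℝ[X] :=
  ∑ j ∈ Finset.range (m + 1), C ((-1 : ℝ) ^ j * ((m + α).choose (m - j)) / j.factorial) * X ^ j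

theorem eval_genLaguerre (α m : ℕ) (z : ℝ) :
    (genLaguerre α m).eval z
      = ∑ j ∈ Finset.range (m + 1), (-1) ^ j * ((m + α).choose (m - j)) * z ^ j / j.factorial := by
  simp only [genLaguerre, eval_finsetSum, eval_mul, eval_C, eval_pow, eval_X]
  exact Finset.sum_congr rfl fun j _ => by ring

/-- Unlike `C(m + α, m - j)`, whose truncated subtraction gives `1` for `j > m`,
`C(m + α, α + j)` vanishes there, so this formula holds for every `j`. -/
theorem coeff_genLaguerre (α m j : ℕ) :
    (genLaguerre α m).coeff j = (-1) ^ j * ((m + α).choose (α + j)) / j.factorial := by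
  simp only [genLaguerre, finsetSum_coeff, coeff_C_mul_X_pow, Finset.sum_ite_eq,
    Finset.mem_range]
  split_ifs with hj
  · rw [Nat.choose_symm_of_eq_add (a := m - j) (b := α + j) (by omega)]
  · rw [Nat.choose_eq_zero_of_lt (by omega)]
    simp

theorem genLaguerre_coeff_recurrence (α m j : ℕ) :
    ((j : ℝ) + 1) * (j + 1 + α) * (genLaguerre α m).coeff (j + 1)
      + (m - j) * (genLaguerre α m).coeff j = 0 := by
  have h := Nat.cast_choose_succ_mul (R := ℝ) (m + α) (α + j)
  simp only [coeff_genLaguerre, Nat.factorial_succ]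
  push_cast at h ⊢
  field_simp
  linear_combination (-(-1 : ℝ) ^ j) * h

theorem genLaguerre_ode (α m : ℕ) :
    X * derivative (derivative (genLaguerre α m))
      + (C ((α : ℝ) + 1) - X) * derivative (genLaguerre α m) + C (m : ℝ) * genLaguerre α m = 0 := by
  ext (_ | j)
  · simp only [coeff_add, sub_mul, coeff_sub, coeff_C_mul, coeff_X_mul_zero, coeff_derivative,
      coeff_zero]
    push_cast
    linear_combination genLaguerre_coeff_recurrence α m 0
  · simp only [coeff_add, sub_mul, coeff_sub, coeff_C_mul, coeff_X_mul, coeff_derivative,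
      coeff_zero]
    have h := genLaguerre_coeff_recurrence α m (j + 1)
    push_cast at h ⊢
    linear_combination h

theorem integrable_eval_mul_exp_neg_mul_sq (p : ℝ[X]) {b : ℝ} (hb : 0 < b) :
    Integrable fun x => p.eval x * exp (-b * x ^ 2) := by
  simp_rw [eval_eq_sum_range, Finset.sum_mul]
  refine integrable_finsetSum _ fun i _ => ?_
  have h := (integrable_rpow_mul_exp_neg_mul_sq hb
    (neg_one_lt_zero.trans_le i.cast_nonneg)).const_mul (p.coeff i)
  simpa only [rpow_natCast, mul_assoc] using h

end Polynomial

theorem deriv_deriv_mul_gaussian {f : ℝ → ℝ} (hf : Differentiable ℝ f)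
    (hf' : Differentiable ℝ (deriv f)) (a : ℝ) {x : ℝ} (hx : x ≠ 0) :
    deriv (deriv fun y => f y * exp (-(a * y ^ 2) / 2)) x
        - deriv (fun y => f y * exp (-(a * y ^ 2) / 2)) x / x
        - a ^ 2 * x ^ 2 * (f x * exp (-(a * x ^ 2) / 2))
      = (deriv (deriv f) x - deriv f x / x - 2 * a * x * deriv f x) * exp (-(a * x ^ 2) / 2) := by
  have hE (y : ℝ) : HasDerivAt (fun y => exp (-(a * y ^ 2) / 2))
      (exp (-(a * y ^ 2) / 2) * (-(a * y))) y := by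
    have h : HasDerivAt (fun y => -(a * y ^ 2) / 2) (-(a * y)) y := by
      refine (((hasDerivAt_pow 2 y).const_mul a).fun_neg.div_const 2).congr_deriv ?_
      norm_num
      ring
    exact h.exp
  have hd : deriv (fun y => f y * exp (-(a * y ^ 2) / 2))
      = fun y => (deriv f y - a * y * f y) * exp (-(a * y ^ 2) / 2) := by
    funext y
    rw [((hf y).hasDerivAt.fun_mul (hE y)).deriv]
    ring
  have hdd := (((hf' x).hasDerivAt.fun_sub (((hasDerivAt_id' x).const_mul a).fun_mul
    (hf x).hasDerivAt)).fun_mul (hE x)).deriv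
  rw [hd, hdd]
  field_simp
  ring

noncomputable def grushinProfile (m : ℕ) (a : ℝ) : ℝ[X] :=
  X ^ 2 * (genLaguerre 1 m).comp (C a * X ^ 2)

theorem grushinProfile_ode (m : ℕ) (a : ℝ) :
    X * derivative (derivative (grushinProfile m a)) - derivative (grushinProfile m a)
        - C (2 * a) * X ^ 2 * derivative (grushinProfile m a)
      = -C (4 * (m + 1) * a) * X * grushinProfile m a := by
  have h := congrArg (fun p => p.comp (C a * X ^ 2)) (genLaguerre_ode 1 m)
  simp only [add_comp, mul_comp, sub_comp, X_comp, C_comp, zero_comp] at h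
  simp only [Nat.cast_one, one_add_one_eq_two, map_ofNat, map_natCast] at h
  simp only [grushinProfile, derivative_mul, derivative_X_pow_succ, derivative_comp,
    derivative_C, derivative_one, derivative_X, Nat.cast_one, map_add, map_one,
    map_mul, map_ofNat, map_natCast, pow_one, zero_mul, zero_add, add_zero, mul_one, neg_mul]
  linear_combination (4 * C a * X ^ 3) * h

/-- The function `u(x) = x²·e^{−|k|x²/2}·L¹_{n−1}(|k|x²)` (with the generalized
Laguerre polynomial written as an explicit finite sum) satisfies the eigenvalue
equation `u'' − u'/x − k²x²u = −4n|k|·u` of the `k`-th Fourier fiber of the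
Grushin-cylinder Laplacian, and is square-integrable for the measure `x⁻¹dx`. -/
theorem grushin_cylinder_eigenfunction (k : ℤ) (hk : k ≠ 0) (n : ℕ) (hn : 0 < n)
    (u : ℝ → ℝ)
    (hu : ∀ x : ℝ, u x = x ^ 2 * Real.exp (-(|(k : ℝ)| * x ^ 2) / 2) *
      ∑ j ∈ Finset.range n,
        (-1 : ℝ) ^ j * (n.choose (n - 1 - j)) * (|(k : ℝ)| * x ^ 2) ^ j / j.factorial) :
    (∀ x : ℝ, 0 < x →
      deriv (deriv u) x - deriv u x / x - (k : ℝ) ^ 2 * x ^ 2 * u x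
        = -(4 * n * |(k : ℝ)|) * u x) ∧
    IntegrableOn (fun x : ℝ => (u x) ^ 2 / x) (Set.Ioi 0) := by
  obtain ⟨m, rfl⟩ := Nat.exists_eq_succ_of_ne_zero hn.ne'
  set a := |(k : ℝ)|
  have ha : 0 < a := abs_pos.mpr (Int.cast_ne_zero.mpr hk)
  have hu' : u = fun x => (grushinProfile m a).eval x * exp (-(a * x ^ 2) / 2) := by
    funext x
    simp only [hu, grushinProfile, eval_mul, eval_pow, eval_X, eval_comp, eval_C,
      eval_genLaguerre, Nat.succ_sub_one, Finset.mul_sum, Finset.sum_mul]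
    exact Finset.sum_congr rfl fun j _ => by ring
  have hderiv : deriv (fun x => (grushinProfile m a).eval x)
      = fun x => (derivative (grushinProfile m a)).eval x :=
    funext fun _ => Polynomial.deriv _
  refine ⟨fun x hx => ?_, ?_⟩
  · have hode := congrArg (eval x) (grushinProfile_ode m a)
    simp only [eval_sub, eval_mul, eval_X, eval_C, eval_pow, eval_neg] at hode
    rw [← sq_abs (k : ℝ), hu']
    beta_reduce
    rw [deriv_deriv_mul_gaussian (Polynomial.differentiable _)
      (by rw [hderiv]; exact Polynomial.differentiable _) a hx.ne', hderiv, Polynomial.deriv]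
    beta_reduce
    field_simp
    push_cast
    linear_combination hode
  · refine ((X ^ 3 * (genLaguerre 1 m).comp (C a * X ^ 2) ^ 2).integrable_eval_mul_exp_neg_mul_sq
      ha).integrableOn.congr_fun (fun x hx => ?_) measurableSet_Ioi
    have hE : exp (-(a * x ^ 2) / 2) ^ 2 = exp (-a * x ^ 2) := by
      rw [← exp_nat_mul]
      ring_nf
    simp only [hu', grushinProfile, eval_mul, eval_pow, eval_X, mul_pow, hE]
    field_simp [(Set.mem_Ioi.mp hx).ne']
end

section
/- Let b be a real number, k an integer with k ≠ b, n a positive integer, and set β = |k − b| > 0. Define u : (0,∞) → ℝ by u(x) = x²·e^{−βx²/2}·∑_{j=0}^{n−1} (−1)^j · binom(n, n−1−j) · (βx²)^j / j!. Then for every x > 0 one has u''(x) − u'(x)/x − (k−b)²x²·u(x) = −4n|k−b|·u(x), and moreover ∫₀^∞ u(x)²·x^{−1} dx < ∞. -/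
/-!
The function `u(x) = x² e^{-βx²/2} L(βx²)` belongs to the family `x^a e^{-βx²/2} R(βx²)`
(`R` a polynomial), which is closed under differentiation: `d/dx` lowers `a` by one and replaces
`R` by `aR + X(2R' − R)`. Hence `u'' − u'/x − β²x²u = e^{-y/2} Q(y)` with `y = βx²` and `Q`
an explicit combination of `L, L', L''`, and `Q = −4nyL` is exactly Laguerre's equation
`yL'' + (2 − y)L' + (n − 1)L = 0`, which for `L = L¹_{n−1}` is a two-term recurrence for its
coefficients. Square integrability holds because `u²/x` is a polynomial times `e^{-βx²}`.
-/

open Real MeasureTheory Polynomial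

/-- The generalized Laguerre polynomial `L¹_{n-1}`. -/
noncomputable def laguerreOnePred (n : ℕ) : ℝ[X] :=
  ∑ j ∈ Finset.range n, C ((-1 : ℝ) ^ j * (n.choose (n - 1 - j)) / j.factorial) * X ^ j

lemma laguerreOnePred_coeff (n j : ℕ) : (laguerreOnePred n).coeff j =
    if j < n then (-1 : ℝ) ^ j * (n.choose (n - 1 - j)) / j.factorial else 0 := by
  simp [laguerreOnePred, finsetSum_coeff, coeff_C_mul, coeff_X_pow]

lemma eval_laguerreOnePred (n : ℕ) (y : ℝ) : (laguerreOnePred n).eval y =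
    ∑ j ∈ Finset.range n, (-1 : ℝ) ^ j * (n.choose (n - 1 - j)) * y ^ j / j.factorial := by
  simp only [laguerreOnePred, eval_finsetSum, eval_mul, eval_C, eval_pow, eval_X]
  exact Finset.sum_congr rfl fun j _ => by ring

lemma laguerreOnePred_coeff_succ (n j : ℕ) :
    ((j : ℝ) + 1) * ((j : ℝ) + 2) * (laguerreOnePred n).coeff (j + 1) =
      ((j : ℝ) + 1 - n) * (laguerreOnePred n).coeff j := by
  simp only [laguerreOnePred_coeff]
  rcases lt_trichotomy (j + 1) n with hlt | rfl | hgt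
  · obtain ⟨m, rfl⟩ : ∃ m, n = j + 2 + m := ⟨n - (j + 2), by omega⟩
    rw [if_pos hlt, if_pos (by omega), show j + 2 + m - 1 - (j + 1) = m by omega,
      show j + 2 + m - 1 - j = m + 1 by omega]
    have hchoose : ((j + 2 + m).choose (m + 1) : ℝ) * (m + 1) =
        ((j + 2 + m).choose m : ℝ) * (j + 2) := by
      have := Nat.choose_succ_right_eq (j + 2 + m) m
      rw [show j + 2 + m - m = j + 2 by omega] at this
      exact_mod_cast this
    rw [Nat.factorial_succ, pow_succ]
    push_cast
    field_simp
    linear_combination hchoose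
  · simp
  · rw [if_neg (by omega), if_neg (by omega)]
    ring

lemma laguerreOnePred_ode (n : ℕ) :
    X * derivative (derivative (laguerreOnePred n)) + (2 - X) * derivative (laguerreOnePred n)
      + C ((n : ℝ) - 1) * laguerreOnePred n = 0 := by
  ext j
  rcases j with _ | i
  · have := laguerreOnePred_coeff_succ n 0
    simp only [sub_mul, coeff_add, coeff_sub, mul_coeff_zero, coeff_X_zero, zero_mul,
      coeff_ofNat_mul, coeff_derivative, coeff_zero, coeff_C_zero] at this ⊢
    push_cast at this ⊢
    linear_combination this
  · have := laguerreOnePred_coeff_succ n (i + 1)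
    simp only [sub_mul, coeff_add, coeff_sub, coeff_X_mul, coeff_C_mul, coeff_ofNat_mul,
      coeff_derivative, coeff_zero]
    push_cast at this ⊢
    linear_combination this

noncomputable def gaussProfile (β : ℝ) (a : ℕ) (R : ℝ[X]) (x : ℝ) : ℝ :=
  x ^ a * exp (-(β * x ^ 2) / 2) * R.eval (β * x ^ 2)

noncomputable def gaussProfileDeriv (a : ℕ) (R : ℝ[X]) : ℝ[X] :=
  (a : ℝ[X]) * R + X * (2 * derivative R - R)

lemma hasDerivAt_gaussProfile (β : ℝ) (a : ℕ) (R : ℝ[X]) (x : ℝ) :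
    HasDerivAt (gaussProfile β (a + 1) R)
      (gaussProfile β a (gaussProfileDeriv (a + 1) R) x) x := by
  have hsq : HasDerivAt (fun x : ℝ => β * x ^ 2) (2 * β * x) x := by
    simpa [mul_comm, mul_left_comm, mul_assoc] using (hasDerivAt_pow 2 x).const_mul β
  have hexponent : HasDerivAt (fun x : ℝ => -(β * x ^ 2) / 2) (-(β * x)) x :=
    (hsq.neg.div_const 2).congr_deriv (by ring)
  have heval := (R.hasDerivAt (β * x ^ 2)).comp x hsq
  refine (((hasDerivAt_pow (a + 1) x).mul hexponent.exp).mul heval).congr_deriv ?_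
  simp only [gaussProfile, gaussProfileDeriv, Function.comp_apply, Pi.mul_apply, eval_add,
    eval_mul, eval_sub, eval_natCast, eval_ofNat, eval_X]
  push_cast
  ring

lemma deriv_gaussProfile (β : ℝ) (a : ℕ) (R : ℝ[X]) :
    deriv (gaussProfile β (a + 1) R) = gaussProfile β a (gaussProfileDeriv (a + 1) R) :=
  funext fun x => (hasDerivAt_gaussProfile β a R x).deriv

lemma gaussProfileDeriv_sub_of_laguerre_ode (ν : ℝ) (P : ℝ[X])
    (hP : X * derivative (derivative P) + (2 - X) * derivative P + C (ν - 1) * P = 0) :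
    gaussProfileDeriv 1 (gaussProfileDeriv 2 P) - gaussProfileDeriv 2 P - X ^ 2 * P
      = -(4 * C ν * X * P) := by
  simp only [gaussProfileDeriv, derivative_add, derivative_mul, derivative_sub, derivative_natCast,
    derivative_ofNat, derivative_X, C_sub, C_1] at hP ⊢
  push_cast
  linear_combination 4 * X * hP

theorem gaussProfile_eigen_of_laguerre_ode (β ν : ℝ) (P : ℝ[X])
    (hP : X * derivative (derivative P) + (2 - X) * derivative P + C (ν - 1) * P = 0)
    {x : ℝ} (hx : x ≠ 0) :
    deriv (deriv (gaussProfile β 2 P)) x - deriv (gaussProfile β 2 P) x / x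
      - β ^ 2 * x ^ 2 * gaussProfile β 2 P x = -(4 * ν * β) * gaussProfile β 2 P x := by
  have key := congrArg (eval (β * x ^ 2)) (gaussProfileDeriv_sub_of_laguerre_ode ν P hP)
  rw [deriv_gaussProfile β 1, deriv_gaussProfile β 0]
  simp only [gaussProfile, Nat.reduceAdd, pow_zero, pow_one, eval_sub, eval_mul, eval_pow,
    eval_neg, eval_C, eval_X, eval_ofNat] at key ⊢
  field_simp
  linear_combination key

lemma integrableOn_eval_mul_exp_neg_mul_sq {β : ℝ} (hβ : 0 < β) (T : ℝ[X]) :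
    IntegrableOn (fun x => T.eval x * exp (-β * x ^ 2)) (Set.Ioi 0) := by
  simp_rw [eval_eq_sum_range, Finset.sum_mul]
  refine integrable_finsetSum _ fun i _ => ?_
  simp_rw [mul_assoc]
  refine Integrable.const_mul ?_ _
  have hi : (-1 : ℝ) < i := by linarith [i.cast_nonneg (α := ℝ)]
  refine (integrableOn_rpow_mul_exp_neg_mul_sq hβ hi).congr_fun (fun x _ => ?_) measurableSet_Ioi
  simp [Real.rpow_natCast]

lemma integrableOn_gaussProfile_sq_div {β : ℝ} (hβ : 0 < β) (a : ℕ) (R : ℝ[X]) :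
    IntegrableOn (fun x => gaussProfile β (a + 1) R x ^ 2 / x) (Set.Ioi 0) := by
  refine (integrableOn_eval_mul_exp_neg_mul_sq hβ
    (X ^ (2 * a + 1) * (R.comp (C β * X ^ 2)) ^ 2)).congr_fun (fun x hx => ?_) measurableSet_Ioi
  have hx : x ≠ 0 := (Set.mem_Ioi.mp hx).ne'
  have hexp : exp (-β * x ^ 2) = exp (-(β * x ^ 2) / 2) ^ 2 := by
    rw [← exp_nat_mul]; ring_nf
  simp only [gaussProfile, eval_mul, eval_pow, eval_comp, eval_C, eval_X, hexp]
  field_simp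
  ring

theorem grushin_cylinder_ab_eigenfunction_general (b : ℝ) (k : ℤ) (hk : (k : ℝ) ≠ b)
    (n : ℕ) (β : ℝ) (hβ : β = |(k : ℝ) - b|)
    (u : ℝ → ℝ)
    (hu : ∀ x : ℝ, u x = x ^ 2 * Real.exp (-(β * x ^ 2) / 2) *
      ∑ j ∈ Finset.range n,
        (-1 : ℝ) ^ j * (n.choose (n - 1 - j)) * (β * x ^ 2) ^ j / j.factorial) :
    (∀ x : ℝ, 0 < x →
      deriv (deriv u) x - deriv u x / x - ((k : ℝ) - b) ^ 2 * x ^ 2 * u x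
        = -(4 * n * |(k : ℝ) - b|) * u x) ∧
    IntegrableOn (fun x : ℝ => (u x) ^ 2 / x) (Set.Ioi 0) := by
  have hu_eq : u = gaussProfile β 2 (laguerreOnePred n) :=
    funext fun x => by rw [hu, gaussProfile, eval_laguerreOnePred]
  have hβ_pos : 0 < β := hβ ▸ abs_pos.mpr (sub_ne_zero.mpr hk)
  rw [← hβ, ← sq_abs, ← hβ, hu_eq]
  exact ⟨fun x hx => gaussProfile_eigen_of_laguerre_ode β n _ (laguerreOnePred_ode n) hx.ne',
    integrableOn_gaussProfile_sq_div hβ_pos 1 _⟩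

/-- Aharonov–Bohm Grushin cylinder: with `β = |k − b| > 0`, the function
`u(x) = x²·e^{−βx²/2}·L¹_{n−1}(βx²)` satisfies the eigenvalue equation
`u'' − u'/x − (k−b)²x²u = −4n|k−b|·u` of the `k`-th Fourier fiber of the
magnetic Laplacian, and is square-integrable for the measure `x⁻¹dx`. -/
theorem grushin_cylinder_ab_eigenfunction (b : ℝ) (k : ℤ) (hk : (k : ℝ) ≠ b)
    (n : ℕ) (hn : 0 < n) (β : ℝ) (hβ : β = |(k : ℝ) - b|)
    (u : ℝ → ℝ)
    (hu : ∀ x : ℝ, u x = x ^ 2 * Real.exp (-(β * x ^ 2) / 2) *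
      ∑ j ∈ Finset.range n,
        (-1 : ℝ) ^ j * (n.choose (n - 1 - j)) * (β * x ^ 2) ^ j / j.factorial) :
    (∀ x : ℝ, 0 < x →
      deriv (deriv u) x - deriv u x / x - ((k : ℝ) - b) ^ 2 * x ^ 2 * u x
        = -(4 * n * |(k : ℝ) - b|) * u x) ∧
    IntegrableOn (fun x : ℝ => (u x) ^ 2 / x) (Set.Ioi 0) :=
  grushin_cylinder_ab_eigenfunction_general b k hk n β hβ u hu
end

section
/- If b is an irrational real number, then the map from ℕ×ℤ to ℝ sending (n,k) to 4n|k−b| is injective; i.e. the point spectrum of the Aharonov–Bohm magnetic Laplacian on the Grushin cylinder is simple for irrational flux b. -/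
open Real

/-- If `p * b = q` for integers `p, q` and irrational `b`, then `p = 0` and `q = 0`. -/
lemma irrational_int_lin (b : ℝ) (hb : Irrational b) (p q : ℤ)
    (h : (p : ℝ) * b = (q : ℝ)) : p = 0 ∧ q = 0 := by
  have hp : p = 0 := by
    by_contra hp
    apply hb
    refine ⟨(q : ℚ) / (p : ℚ), ?_⟩
    have hpR : (p : ℝ) ≠ 0 := Int.cast_ne_zero.mpr hp
    push_cast
    field_simp
    linarith
  refine ⟨hp, ?_⟩
  subst hp
  simpa using h.symm

/-- For irrational Aharonov–Bohm flux `b`, the map `(n,k) ↦ 4n|k−b|` on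
`ℕ×ℤ` (with `n ≥ 1`) is injective: the point spectrum of the magnetic
Laplacian on the Grushin cylinder is simple. -/
theorem grushin_cylinder_ab_simple_spectrum (b : ℝ) (hb : Irrational b)
    (n n' : ℕ) (hn : 0 < n) (hn' : 0 < n') (k k' : ℤ)
    (h : 4 * n * |(k : ℝ) - b| = 4 * n' * |(k' : ℝ) - b|) :
    n = n' ∧ k = k' := by
  have h4 : (n : ℝ) * |(k : ℝ) - b| = (n' : ℝ) * |(k' : ℝ) - b| := by linarith
  have hnR : (0 : ℝ) < n := by exact_mod_cast hn
  have hnR' : (0 : ℝ) < n' := by exact_mod_cast hn'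
  rcases abs_cases ((k : ℝ) - b) with ⟨e1, _⟩ | ⟨e1, _⟩ <;>
    rcases abs_cases ((k' : ℝ) - b) with ⟨e2, _⟩ | ⟨e2, _⟩ <;>
    rw [e1, e2] at h4
  · -- n(k-b) = n'(k'-b)
    have key := irrational_int_lin b hb ((n' : ℤ) - n) ((n' : ℤ) * k' - n * k)
      (by push_cast; ring_nf; ring_nf at h4; linarith)
    have hnn' : (n : ℤ) = n' := by omega
    have hne : n = n' := by exact_mod_cast hnn'
    refine ⟨hne, ?_⟩
    have hq := key.2
    rw [← hnn'] at hq
    have hnz : (n : ℤ) ≠ 0 := by exact_mod_cast hn.ne'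
    have : k' = k := mul_left_cancel₀ hnz (by linarith)
    omega
  · -- n(k-b) = n'(b-k') : impossible
    exfalso
    have key := irrational_int_lin b hb (-(n' : ℤ) - n) (-(n' : ℤ) * k' - n * k)
      (by push_cast; ring_nf; ring_nf at h4; linarith)
    omega
  · exfalso
    have key := irrational_int_lin b hb ((n' : ℤ) + n) ((n' : ℤ) * k' + n * k)
      (by push_cast; ring_nf; ring_nf at h4; linarith)
    omega
  · -- n(b-k) = n'(b-k')
    have key := irrational_int_lin b hb ((n : ℤ) - n') ((n : ℤ) * k - n' * k')
      (by push_cast; ring_nf; ring_nf at h4; linarith)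
    have hnn' : (n : ℤ) = n' := by omega
    have hne : n = n' := by exact_mod_cast hnn'
    refine ⟨hne, ?_⟩
    have hq := key.2
    rw [← hnn'] at hq
    have hnz : (n : ℤ) ≠ 0 := by exact_mod_cast hn.ne'
    exact mul_left_cancel₀ hnz (by linarith)
end

section
/- Let b = p/q with p an integer, q ≥ 2 a positive integer, and gcd(|p|,q) = 1. Let λ be a real number such that there exists at least one pair (n,k) ∈ ℕ×ℤ with 4n|k − p/q| = λ. Then m := qλ/4 is a positive integer, and the number of pairs (n,k) ∈ ℕ×ℤ with 4n|k − p/q| = λ is at most 2·d(m), where d(m) denotes the number of positive divisors of m. -/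
/-!
Multiplying by `q`, the equation `4n|k − p/q| = λ` becomes `n·|kq − p| = qλ/4`, so every
solution gives the same natural number `m = qλ/4`; it is nonzero because `q ∤ p`. A solution
`(n, k)` is then determined by the divisor `n` of `m` together with the sign of `kq − p`,
since `n` fixes `|kq − p| = m/n` and `k ↦ kq − p` is injective.
-/

theorem not_natCast_dvd_of_coprime {p : ℤ} {q : ℕ} (hq : 2 ≤ q)
    (hpq : Nat.gcd p.natAbs q = 1) : ¬ (q : ℤ) ∣ p := by
  intro hdvd
  have hq_one : q ∣ 1 := hpq ▸ Nat.dvd_gcd (Int.natCast_dvd.mp hdvd) dvd_rfl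
  have := Nat.le_of_dvd one_pos hq_one
  omega

theorem mul_sub_ne_zero_of_coprime {p : ℤ} {q : ℕ} (hq : 2 ≤ q) (hpq : Nat.gcd p.natAbs q = 1)
    (k : ℤ) : k * q - p ≠ 0 := fun h =>
  not_natCast_dvd_of_coprime hq hpq ⟨k, by linarith⟩

theorem four_mul_abs_sub_div_eq_iff {q : ℕ} (hq : 0 < q) (n : ℕ) (k p : ℤ) (lam : ℝ) :
    4 * n * |(k : ℝ) - p / q| = lam ↔ ((n * (k * q - p).natAbs : ℕ) : ℝ) = q * lam / 4 := by
  have hq' : (0 : ℝ) < q := by exact_mod_cast hq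
  set a := |(k : ℝ) - p / q|
  have habs : (q : ℝ) * a = |(k : ℝ) * q - p| := by
    rw [← abs_of_pos hq', ← abs_mul, abs_of_pos hq', mul_sub, mul_div_cancel₀ _ hq'.ne',
      mul_comm]
  push_cast [Nat.cast_natAbs]
  rw [← habs, show (n : ℝ) * (q * a) = q * (4 * n * a) / 4 by ring, div_left_inj' four_ne_zero,
    mul_right_inj' hq'.ne']

theorem ncard_pos_mul_natAbs_eq_le {g : ℤ → ℤ} (hg : g.Injective) {m : ℕ} (hm : m ≠ 0) :
    {P : ℕ × ℤ | 0 < P.1 ∧ P.1 * (g P.2).natAbs = m}.ncard ≤ 2 * m.divisors.card := by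
  set S := {P : ℕ × ℤ | 0 < P.1 ∧ P.1 * (g P.2).natAbs = m}
  set T : Finset (ℕ × Bool) := m.divisors ×ˢ Finset.univ
  set f : ℕ × ℤ → ℕ × Bool := fun P => (P.1, decide (0 ≤ g P.2))
  have hmaps : ∀ P ∈ S, f P ∈ (T : Set (ℕ × Bool)) := by
    rintro ⟨n, k⟩ ⟨-, hk⟩
    simp only [f, T, Finset.coe_product, Set.mem_prod, Finset.mem_coe, Nat.mem_divisors]
    exact ⟨⟨⟨_, hk.symm⟩, hm⟩, Finset.mem_univ _⟩
  have hinj : Set.InjOn f S := by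
    rintro ⟨n, k⟩ ⟨hn, hk⟩ ⟨n', k'⟩ ⟨-, hk'⟩ hf
    simp only [f, Prod.mk.injEq, decide_eq_decide] at hf
    obtain ⟨rfl, hsign⟩ := hf
    have habs : (g k).natAbs = (g k').natAbs := Nat.eq_of_mul_eq_mul_left hn (hk.trans hk'.symm)
    have : g k = g k' := by omega
    rw [hg this]
  calc S.ncard ≤ (T : Set (ℕ × Bool)).ncard :=
        Set.ncard_le_ncard_of_injOn f hmaps hinj T.finite_toSet
    _ = 2 * m.divisors.card := by
        rw [Set.ncard_coe_finset, Finset.card_product, Finset.card_univ, Fintype.card_bool,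
          mul_comm]

/-- For rational Aharonov–Bohm flux `b = p/q` (in lowest terms, `q ≥ 2`), any
eigenvalue `λ = 4n|k − p/q|` of the magnetic Laplacian on the Grushin cylinder
is such that `m = qλ/4` is a positive integer, and its multiplicity (the number
of pairs `(n,k)` with `4n|k − p/q| = λ`) is at most `2·d(m)`. -/
theorem grushin_cylinder_ab_rational_degeneracy
    (p : ℤ) (q : ℕ) (hq : 2 ≤ q) (hpq : Nat.gcd p.natAbs q = 1)
    (lam : ℝ)
    (hlam : ∃ n : ℕ, ∃ k : ℤ, 0 < n ∧ 4 * n * |(k : ℝ) - (p : ℝ) / q| = lam) :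
    ∃ m : ℕ, 0 < m ∧ (m : ℝ) = (q : ℝ) * lam / 4 ∧
      Set.ncard {P : ℕ × ℤ | 0 < P.1 ∧ 4 * P.1 * |(P.2 : ℝ) - (p : ℝ) / q| = lam}
        ≤ 2 * m.divisors.card := by
  obtain ⟨n₀, k₀, hn₀, hlam₀⟩ := hlam
  have hq_pos : 0 < q := by omega
  set m := n₀ * (k₀ * q - p).natAbs
  have hm_pos : 0 < m :=
    Nat.mul_pos hn₀ (Int.natAbs_pos.mpr (mul_sub_ne_zero_of_coprime hq hpq k₀))
  have hm_eq : (m : ℝ) = q * lam / 4 :=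
    (four_mul_abs_sub_div_eq_iff hq_pos n₀ k₀ p lam).mp hlam₀
  have hset : {P : ℕ × ℤ | 0 < P.1 ∧ 4 * P.1 * |(P.2 : ℝ) - (p : ℝ) / q| = lam} =
      {P : ℕ × ℤ | 0 < P.1 ∧ P.1 * (P.2 * q - p).natAbs = m} := by
    ext ⟨n, k⟩
    simp only [Set.mem_ofPred_eq, four_mul_abs_sub_div_eq_iff hq_pos, ← hm_eq, Nat.cast_inj]
  have hg : Function.Injective fun k : ℤ => k * q - p := fun k k' h =>
    mul_right_cancel₀ (by exact_mod_cast hq_pos.ne' : (q : ℤ) ≠ 0) (sub_left_inj.mp h)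
  refine ⟨m, hm_pos, hm_eq, ?_⟩
  rw [hset]
  exact ncard_pos_mul_natAbs_eq_le hg hm_pos.ne'
end

section
/- Fix λ > 0. For each positive integer j let n_j = 2j, b_j = λ/(4(n_j+1)), and define f_j : [0,∞) → ℝ by f_j(x) = b_j x² · e^{−b_j x²/2} · ∑_{i=0}^{n_j−1} (−1)^i binom(n_j, n_j−1−i) (b_j x²)^i / i!. Then, as j → ∞, f_j converges uniformly on every compact subset of [0,∞) to the function x ↦ (√λ·x/2)·J₁(√λ·x), where J₁(y) = ∑_{m=0}^∞ (−1)^m (y/2)^{2m+1}/(m!·(m+1)!). -/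
open Real Filter Topology Finset Function
open scoped Nat

/-!
With `t = λx²/4` and `h = 1/(n_j+1)`, both `f_j(x)` and the limit are values of one series
`Φ(h, t) = e^{-ht/2} ∑ᵢ (-1)ⁱ t^{i+1} / (i! (i+1)!) ∏_{k ≤ i} (1 - (k+1)h)`, at `h = 1/(n_j+1)`
and at `h = 0`, because `C(N, i+1) (i+1)! / (N+1)^{i+1} = ∏_{k ≤ i} (1 - (k+1)/(N+1))`.
On `{0} ∪ {1/(N+1)}` these products have modulus at most `1` (they vanish for `i ≥ N`), so by
the Weierstrass M-test `Φ` is jointly continuous there, and joint continuity over a compact set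
of `t` gives uniform convergence as `h → 0`.
-/

theorem ContinuousOn.tendstoUniformlyOn_nhdsWithin {α β E : Type*} [TopologicalSpace α]
    [TopologicalSpace β] [UniformSpace E] {f : α → β → E} {s : Set α} {k : Set β} {q : α}
    (hk : IsCompact k) (hf : ContinuousOn (uncurry f) (s ×ˢ k)) (hq : q ∈ s) :
    TendstoUniformlyOn f (f q) (𝓝[s] q) k := fun u hu => by
  obtain ⟨v, hv, hvu⟩ := hk.mem_uniformity_of_prod hf hq (symm_le_uniformity hu)
  exact eventually_of_mem hv hvu

def unitFractions : Set ℝ := insert 0 (Set.range fun N : ℕ => ((N : ℝ) + 1)⁻¹)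

theorem tendsto_inv_succ_nhdsWithin_unitFractions {n : ℕ → ℕ} (hn : Tendsto n atTop atTop) :
    Tendsto (fun j => ((n j : ℝ) + 1)⁻¹) atTop (𝓝[unitFractions] 0) := by
  refine tendsto_nhdsWithin_iff.2 ⟨?_, Eventually.of_forall fun j => Or.inr ⟨n j, rfl⟩⟩
  simpa only [one_div, comp_def] using (tendsto_one_div_add_atTop_nhds_zero_nat (𝕜 := ℝ)).comp hn

theorem prod_one_sub_mul_inv_succ_eq_zero {N m : ℕ} (hNm : N < m) :
    ∏ k ∈ range m, (1 - ((k : ℝ) + 1) * ((N : ℝ) + 1)⁻¹) = 0 :=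
  prod_eq_zero (mem_range.2 hNm) (by field_simp; ring)

theorem pow_mul_prod_one_sub_mul_inv_succ {N m : ℕ} (hmN : m ≤ N) :
    ((N : ℝ) + 1) ^ m * ∏ k ∈ range m, (1 - ((k : ℝ) + 1) * ((N : ℝ) + 1)⁻¹)
      = m ! * N.choose m := by
  have hfactor : ∀ k ∈ range m, ((N : ℝ) + 1) * (1 - ((k : ℝ) + 1) * ((N : ℝ) + 1)⁻¹)
      = ((N - k : ℕ) : ℝ) := by
    intro k hk
    rw [Nat.cast_sub (by have := mem_range.1 hk; omega)]
    field_simp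
    ring
  rw [← card_range m, ← prod_const, card_range, ← prod_mul_distrib, prod_congr rfl hfactor,
    ← Nat.cast_prod, ← Nat.descFactorial_eq_prod_range, Nat.descFactorial_eq_factorial_mul_choose, Nat.cast_mul]

theorem abs_prod_one_sub_mul_le_one {h : ℝ} (hh : h ∈ unitFractions) (m : ℕ) :
    |∏ k ∈ range m, (1 - ((k : ℝ) + 1) * h)| ≤ 1 := by
  rcases hh with rfl | ⟨N, rfl⟩
  · simp
  rcases le_or_gt m N with hmN | hNm
  · rw [abs_prod]
    refine prod_le_one (fun _ _ => abs_nonneg _) fun k hk => abs_le.2 ⟨?_, ?_⟩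
    · have : ((k : ℝ) + 1) * ((N : ℝ) + 1)⁻¹ ≤ 1 := by
        rw [← div_eq_mul_inv, div_le_one (by positivity)]
        have := mem_range.1 hk
        exact_mod_cast (by omega : k + 1 ≤ N + 1)
      linarith
    · have : 0 ≤ ((k : ℝ) + 1) * ((N : ℝ) + 1)⁻¹ := by positivity
      linarith
  · simp [prod_one_sub_mul_inv_succ_eq_zero hNm]

theorem summable_pow_succ_div_factorial_mul_factorial (M : ℝ) :
    Summable fun i : ℕ => M ^ (i + 1) / (i ! * (i + 1)!) := by
  refine .of_norm_bounded ((Real.summable_pow_div_factorial |M|).mul_left |M|) fun i => ?_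
  rw [norm_div, norm_pow, Real.norm_eq_abs, pow_succ, mul_comm _ |M|, mul_div_assoc]
  gcongr
  rw [norm_of_nonneg (by positivity)]
  exact le_mul_of_one_le_right (by positivity) (by exact_mod_cast (i + 1).factorial_pos)

noncomputable def rescaledLaguerreTerm (h t : ℝ) (i : ℕ) : ℝ :=
  (-1) ^ i * t ^ (i + 1) / (i ! * (i + 1)!) * ∏ k ∈ range (i + 1), (1 - ((k : ℝ) + 1) * h)

noncomputable def rescaledLaguerre (h t : ℝ) : ℝ :=
  exp (-(h * t) / 2) * ∑' i, rescaledLaguerreTerm h t i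

theorem abs_rescaledLaguerreTerm_le {h t M : ℝ} (hh : h ∈ unitFractions) (ht : |t| ≤ M)
    (i : ℕ) : |rescaledLaguerreTerm h t i| ≤ M ^ (i + 1) / (i ! * (i + 1)!) := by
  rw [rescaledLaguerreTerm, abs_mul, abs_div, abs_mul, abs_pow, abs_neg, abs_one, one_pow,
    one_mul, abs_pow, abs_of_pos (by positivity : (0 : ℝ) < i ! * (i + 1)!)]
  calc |t| ^ (i + 1) / (i ! * (i + 1)!) * |∏ k ∈ range (i + 1), (1 - ((k : ℝ) + 1) * h)|
      ≤ |t| ^ (i + 1) / (i ! * (i + 1)!) :=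
        mul_le_of_le_one_right (by positivity) (abs_prod_one_sub_mul_le_one hh _)
    _ ≤ M ^ (i + 1) / (i ! * (i + 1)!) := by gcongr

theorem continuousOn_rescaledLaguerre {K : Set ℝ} (hK : Bornology.IsBounded K) :
    ContinuousOn (uncurry rescaledLaguerre) (unitFractions ×ˢ K) := by
  obtain ⟨M, hM⟩ := hK.exists_norm_le
  refine (Continuous.continuousOn (by fun_prop)).mul <|
    continuousOn_tsum (fun i => Continuous.continuousOn ?_)
      (summable_pow_succ_div_factorial_mul_factorial M) fun i p hp =>
        abs_rescaledLaguerreTerm_le hp.1 (hM p.2 hp.2) i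
  simp only [rescaledLaguerreTerm]
  fun_prop

theorem tendstoUniformlyOn_rescaledLaguerre {K : Set ℝ} (hK : IsCompact K) :
    TendstoUniformlyOn rescaledLaguerre (rescaledLaguerre 0) (𝓝[unitFractions] 0) K :=
  (continuousOn_rescaledLaguerre hK.isBounded).tendstoUniformlyOn_nhdsWithin hK
    (Set.mem_insert 0 _)

theorem rescaledLaguerre_zero (t : ℝ) :
    rescaledLaguerre 0 t = ∑' i : ℕ, (-1) ^ i * t ^ (i + 1) / (i ! * (i + 1)!) := by
  simp [rescaledLaguerre, rescaledLaguerreTerm]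

theorem rescaledLaguerre_inv_succ (N : ℕ) (s : ℝ) :
    rescaledLaguerre ((N + 1)⁻¹) ((N + 1) * s) = s * exp (-s / 2) *
      ∑ i ∈ range N, (-1) ^ i * (N.choose (N - 1 - i) : ℝ) * s ^ i / i ! := by
  have hN : (N : ℝ) + 1 ≠ 0 := by positivity
  have hterm : ∀ i ∈ range N, rescaledLaguerreTerm ((N + 1)⁻¹) ((N + 1) * s) i
      = s * ((-1) ^ i * (N.choose (N - 1 - i) : ℝ) * s ^ i / i !) := by
    intro i hi
    have hiN := mem_range.1 hi
    have hprod : ∏ k ∈ range (i + 1), (1 - ((k : ℝ) + 1) * ((N : ℝ) + 1)⁻¹)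
        = (i + 1)! * N.choose (i + 1) / ((N : ℝ) + 1) ^ (i + 1) := by
      rw [← pow_mul_prod_one_sub_mul_inv_succ (by omega)]
      field_simp
    rw [rescaledLaguerreTerm, show N - 1 - i = N - (i + 1) by omega, Nat.choose_symm (by omega),
      hprod, mul_pow]
    field_simp
    ring
  rw [rescaledLaguerre, tsum_eq_sum (s := range N), sum_congr rfl hterm, ← mul_sum,
    inv_mul_cancel_left₀ hN]
  · ring
  · intro i hi
    rw [rescaledLaguerreTerm, prod_one_sub_mul_inv_succ_eq_zero (by simp at hi; omega), mul_zero]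

theorem half_mul_besselJ1_series (y : ℝ) :
    y / 2 * ∑' m : ℕ, (-1 : ℝ) ^ m * (y / 2) ^ (2 * m + 1) / (m ! * (m + 1)!)
      = ∑' i : ℕ, (-1) ^ i * ((y / 2) ^ 2) ^ (i + 1) / (i ! * (i + 1)!) := by
  rw [← tsum_mul_left]
  congr 1 with m
  rw [← pow_mul]
  ring

/-- Degeneration of eigenfunctions on the Grushin cylinder: with `n_j = 2j`,
`b_j = λ/(4(n_j+1))`, the (rescaled Whittaker) eigenfunctions
`f_j(x) = b_j x² e^{−b_j x²/2} L¹_{n_j−1}(b_j x²)` converge, uniformly on every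
compact subset of `[0,∞)`, to the generalized eigenfunction
`x ↦ (√λ·x/2)·J₁(√λ·x)`. -/
theorem grushin_cylinder_eigenfunction_degeneration (lam : ℝ) (hlam : 0 < lam)
    (n : ℕ → ℕ) (hn : ∀ j : ℕ, n j = 2 * j)
    (b : ℕ → ℝ) (hb : ∀ j : ℕ, b j = lam / (4 * ((n j : ℝ) + 1)))
    (f : ℕ → ℝ → ℝ)
    (hf : ∀ j : ℕ, ∀ x : ℝ, f j x =
      b j * x ^ 2 * Real.exp (-(b j * x ^ 2) / 2) *
        ∑ i ∈ Finset.range (n j),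
          (-1 : ℝ) ^ i * ((n j).choose (n j - 1 - i)) * (b j * x ^ 2) ^ i / i.factorial)
    (J1 : ℝ → ℝ)
    (hJ1 : ∀ y : ℝ, J1 y = ∑' m : ℕ,
      (-1 : ℝ) ^ m * (y / 2) ^ (2 * m + 1) / (m.factorial * (m + 1).factorial)) :
    ∀ K : Set ℝ, IsCompact K → K ⊆ Set.Ici 0 →
      TendstoUniformlyOn f
        (fun x : ℝ => Real.sqrt lam * x / 2 * J1 (Real.sqrt lam * x)) atTop K := by
  intro K hK _
  set t : ℝ → ℝ := fun x => lam * x ^ 2 / 4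
  have hf_eq : f = fun j => rescaledLaguerre ((n j + 1)⁻¹) ∘ t := by
    ext j x
    have hbt : t x = (n j + 1) * (b j * x ^ 2) := by
      rw [show t x = lam * x ^ 2 / 4 from rfl, hb]
      field_simp
    rw [hf, comp_apply, hbt, rescaledLaguerre_inv_succ]
  have hlim_eq : (fun x => √lam * x / 2 * J1 (√lam * x)) = rescaledLaguerre 0 ∘ t := by
    ext x
    rw [hJ1, half_mul_besselJ1_series, comp_apply, rescaledLaguerre_zero]
    congr 3 with i
    rw [div_pow, mul_pow, sq_sqrt hlam.le]
    ring
  have hn_atTop : Tendsto n atTop atTop :=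
    tendsto_atTop_mono (fun j => by rw [id, hn]; omega) tendsto_id
  have hlaguerre : TendstoUniformlyOn (fun j => rescaledLaguerre ((n j + 1)⁻¹))
      (rescaledLaguerre 0) atTop (t '' K) := fun u hu =>
    (tendsto_inv_succ_nhdsWithin_unitFractions hn_atTop).eventually
      (tendstoUniformlyOn_rescaledLaguerre (hK.image (by fun_prop)) u hu)
  rw [hf_eq, hlim_eq]
  exact (hlaguerre.comp t).mono (Set.subset_preimage_image t K)
end

section
/- Let k be a nonnegative integer and n a positive integer. Define u : (0, π/2) → ℝ by u(x) = ∑_{ℓ=0}^{n} (−1)^ℓ · binom(n,ℓ) · (∏_{i=0}^{ℓ−1} (n+k+i)) / (∏_{i=0}^{ℓ−1} (k+1+i)) · cos(x)^{k+2ℓ}. Then for every x ∈ (0, π/2) one has u''(x) − u'(x)/(sin x · cos x) − k²·tan²(x)·u(x) = −4n(n+k)·u(x), and moreover ∫₀^{π/2} u(x)²/tan(x) dx < ∞. -/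
/-!
With `q = cos² x` one has `Δ̃ₖ (cos^m x) = (m² - k²) tan² x · cos^m x`, and for `m = k + 2l`
the factor is `4 l (l + k)`. As `tan² x = (1 - q) / q`, applying `Δ̃ₖ` to `u = cos^k x · F(q)`
multiplies the coefficient `c_l` of `q^l` by `4 l (l + k)` and the whole sum by `(1 - q) / q`; the
hypergeometric recurrence `c_{l+1} (l + 1)(l + 1 + k) = (l (l + k) - n (n + k)) c_l` makes this
telescope to `-4 n (n + k) u`. At `q = 1` the same identity gives `n (n + k) F(1) = 0`, so
`F(q) = (q - 1) G(q)` and `u² / tan x = cos^(2k+1) x · sin³ x · G(q)²` is continuous up to the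
boundary.
-/

open Real MeasureTheory Finset

/-- `Δ̃ₖ`. -/
noncomputable def grushinFiberLaplacian (k : ℕ) (f : ℝ → ℝ) (x : ℝ) : ℝ :=
  deriv (deriv f) x - deriv f x / (sin x * cos x) - (k : ℝ) ^ 2 * tan x ^ 2 * f x

theorem grushinFiberLaplacian_sum {ι : Type*} (k : ℕ) (s : Finset ι) (c : ι → ℝ)
    (f : ι → ℝ → ℝ) (hf : ∀ i ∈ s, ContDiff ℝ 2 (f i)) (x : ℝ) :
    grushinFiberLaplacian k (fun y => ∑ i ∈ s, c i * f i y) x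
      = ∑ i ∈ s, c i * grushinFiberLaplacian k (f i) x := by
  have hderiv : deriv (fun y => ∑ i ∈ s, c i * f i y) = fun y => ∑ i ∈ s, c i * deriv (f i) y :=
    funext fun y => (HasDerivAt.fun_sum fun i hi =>
      (((hf i hi).differentiable two_ne_zero y).hasDerivAt.const_mul (c i))).deriv
  have hderiv2 : deriv (fun y => ∑ i ∈ s, c i * deriv (f i) y) x
      = ∑ i ∈ s, c i * deriv (deriv (f i)) x :=
    (HasDerivAt.fun_sum fun i hi =>
      ((((contDiff_succ_iff_deriv (n := 1)).1 (hf i hi)).2.2.differentiable one_ne_zero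
        x).hasDerivAt.const_mul (c i))).deriv
  simp only [grushinFiberLaplacian, hderiv, hderiv2, sum_div, mul_sum, ← sum_sub_distrib]
  exact sum_congr rfl fun i _ => by ring

theorem grushinFiberLaplacian_cos_pow (k m : ℕ) {x : ℝ} (hs : sin x ≠ 0) (hc : cos x ≠ 0) :
    grushinFiberLaplacian k (fun y => cos y ^ m) x
      = ((m : ℝ) ^ 2 - k ^ 2) * tan x ^ 2 * cos x ^ m := by
  have hderiv : deriv (fun y => cos y ^ m) = fun y => -(m * cos y ^ (m - 1) * sin y) :=
    funext fun y => ((hasDerivAt_cos y).pow m).deriv.trans (by ring)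
  have hderiv2 : HasDerivAt (fun y => -(m * cos y ^ (m - 1) * sin y))
      (-(m * ((m - 1 : ℕ) * cos x ^ (m - 1 - 1) * -sin x * sin x + cos x ^ (m - 1) * cos x))) x :=
    ((((hasDerivAt_cos x).fun_pow (m - 1)).const_mul (m : ℝ)).mul
      (hasDerivAt_sin x)).neg.congr_deriv (by ring)
  rw [grushinFiberLaplacian, hderiv, hderiv2.deriv, tan_eq_sin_div_cos]
  -- `m - 1` and `m - 1 - 1` truncate for `m < 2`
  rcases m with _ | _ | m
  · simp
  all_goals field_simp; rw [sin_sq]; push_cast; ring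

theorem sum_mul_pow_mul_one_sub (μ c : ℕ → ℝ) (n : ℕ) (hμ : μ 0 = 0)
    (hrec : ∀ j < n, c (j + 1) * μ (j + 1) = (μ j - μ n) * c j) (q : ℝ) :
    (∑ l ∈ range (n + 1), c l * μ l * q ^ l) * (1 - q)
      = -μ n * q * ∑ l ∈ range (n + 1), c l * q ^ l := by
  have hstep : ∀ j ∈ range n, c (j + 1) * μ (j + 1) * q ^ (j + 1) - c j * μ j * q ^ j * q
      = -μ n * q * (c j * q ^ j) := fun j hj => by
    rw [hrec j (mem_range.1 hj)]; ring
  rw [mul_one_sub, sum_mul, sum_range_succ' (fun l => c l * μ l * q ^ l),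
    sum_range_succ (fun l => c l * μ l * q ^ l * q), mul_sum, sum_range_succ,
    ← sum_congr rfl hstep, sum_sub_distrib, hμ]
  ring

theorem sum_mul_pow_eq_sub_one_mul (c : ℕ → ℝ) (N : ℕ) (h : ∑ l ∈ range N, c l = 0) (q : ℝ) :
    ∑ l ∈ range N, c l * q ^ l = (q - 1) * ∑ l ∈ range N, c l * ∑ i ∈ range l, q ^ i := by
  calc ∑ l ∈ range N, c l * q ^ l = ∑ l ∈ range N, c l * q ^ l - ∑ l ∈ range N, c l := by
        rw [h, sub_zero]
    _ = ∑ l ∈ range N, c l * ((∑ i ∈ range l, q ^ i) * (q - 1)) := by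
        rw [← sum_sub_distrib]
        exact sum_congr rfl fun l _ => by rw [geom_sum_mul]; ring
    _ = _ := by
        rw [mul_sum]
        exact sum_congr rfl fun l _ => by ring

/-- The coefficients of `F(-n, n + k; k + 1; q)`. -/
noncomputable def grushinCoeff (k n l : ℕ) : ℝ :=
  (-1 : ℝ) ^ l * n.choose l * (∏ i ∈ range l, ((n : ℝ) + k + i)) /
    ∏ i ∈ range l, ((k : ℝ) + 1 + i)

theorem grushinCoeff_succ_mul {k n j : ℕ} (hj : j < n) :
    grushinCoeff k n (j + 1) * (((j + 1 : ℕ) : ℝ) * ((j + 1 : ℕ) + k))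
      = ((j : ℝ) * (j + k) - n * (n + k)) * grushinCoeff k n j := by
  have hchoose : (n.choose (j + 1) : ℝ) * (j + 1) = n.choose j * (n - j) := by
    have h := Nat.choose_succ_right_eq n j
    rw [← Nat.cast_inj (R := ℝ)] at h
    push_cast [Nat.cast_sub hj.le] at h
    exact h
  rw [grushinCoeff, grushinCoeff, prod_range_succ, prod_range_succ]
  field_simp
  push_cast
  linear_combination
    (-1 : ℝ) ^ (j + 1) * (∏ i ∈ range j, ((n : ℝ) + k + i)) * (n + k + j) * (j + 1 + k) * hchoose

theorem grushinFiberLaplacian_sum_cos_pow (k n : ℕ) (c : ℕ → ℝ)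
    (hrec : ∀ j < n, c (j + 1) * (((j + 1 : ℕ) : ℝ) * ((j + 1 : ℕ) + k))
      = ((j : ℝ) * (j + k) - n * (n + k)) * c j)
    {x : ℝ} (hs : sin x ≠ 0) (hc : cos x ≠ 0) :
    grushinFiberLaplacian k (fun y => ∑ l ∈ range (n + 1), c l * cos y ^ (k + 2 * l)) x
      = -(4 * n * ((n : ℝ) + k)) * ∑ l ∈ range (n + 1), c l * cos x ^ (k + 2 * l) := by
  have htel := sum_mul_pow_mul_one_sub (fun l => l * (l + k)) c n (by simp) hrec (cos x ^ 2)
  have hpow : ∀ l, cos x ^ (k + 2 * l) = cos x ^ k * (cos x ^ 2) ^ l := fun l => by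
    rw [pow_add, pow_mul]
  rw [grushinFiberLaplacian_sum k _ c _ (fun l _ => contDiff_cos.pow _) x]
  calc ∑ l ∈ range (n + 1), c l * grushinFiberLaplacian k (fun y => cos y ^ (k + 2 * l)) x
      = 4 * cos x ^ k / cos x ^ 2 *
          ((∑ l ∈ range (n + 1), c l * (l * (l + k)) * (cos x ^ 2) ^ l) * (1 - cos x ^ 2)) := by
        rw [sum_mul, mul_sum]
        refine sum_congr rfl fun l _ => ?_
        rw [grushinFiberLaplacian_cos_pow k _ hs hc, tan_eq_sin_div_cos, div_pow, sin_sq, hpow]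
        push_cast
        field_simp
        ring
    _ = _ := by
        rw [htel]
        simp only [mul_sum]
        refine sum_congr rfl fun l _ => ?_
        rw [hpow]
        field_simp

theorem integrableOn_sum_cos_pow_sq_div_tan (k N : ℕ) (c : ℕ → ℝ) (h : ∑ l ∈ range N, c l = 0) :
    IntegrableOn (fun x => (∑ l ∈ range N, c l * cos x ^ (k + 2 * l)) ^ 2 / tan x)
      (Set.Ioo 0 (π / 2)) := by
  let G : ℝ → ℝ := fun q => ∑ l ∈ range N, c l * ∑ i ∈ range l, q ^ i
  have hcont : Continuous fun x => cos x ^ (2 * k + 1) * sin x ^ 3 * G (cos x ^ 2) ^ 2 := by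
    fun_prop
  refine (hcont.integrableOn_Icc.mono_set Set.Ioo_subset_Icc_self).congr_fun (fun x hx => ?_)
    measurableSet_Ioo
  have hs : 0 < sin x := sin_pos_of_pos_of_lt_pi hx.1 (by linarith [hx.2, pi_pos])
  have hc : 0 < cos x := cos_pos_of_mem_Ioo ⟨by linarith [hx.1, pi_pos], hx.2⟩
  have hu : ∑ l ∈ range N, c l * cos x ^ (k + 2 * l)
      = -(cos x ^ k * sin x ^ 2 * G (cos x ^ 2)) := by
    simp only [pow_add, pow_mul, mul_left_comm _ (cos x ^ k), ← mul_sum,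
      sum_mul_pow_eq_sub_one_mul c N h, sin_sq, G]
    ring
  rw [hu, tan_eq_sin_div_cos]
  field_simp
  ring

/-- Grushin sphere eigenfunctions: the terminating hypergeometric function
`u(x) = cos(x)^k · F(−n, n+k; k+1; cos²x)`, written as an explicit finite sum,
satisfies `u'' − u'/(sin x cos x) − k² tan²x · u = −4n(n+k)·u` on `(0, π/2)`
and is square-integrable for the measure `dx / tan x`. -/
theorem grushin_sphere_eigenfunction (k : ℕ) (n : ℕ) (hn : 0 < n)
    (u : ℝ → ℝ)
    (hu : ∀ x : ℝ, u x = ∑ l ∈ Finset.range (n + 1),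
      (-1 : ℝ) ^ l * (n.choose l) *
        (∏ i ∈ Finset.range l, ((n : ℝ) + k + i)) /
        (∏ i ∈ Finset.range l, ((k : ℝ) + 1 + i)) *
        Real.cos x ^ (k + 2 * l)) :
    (∀ x : ℝ, x ∈ Set.Ioo 0 (Real.pi / 2) →
      deriv (deriv u) x - deriv u x / (Real.sin x * Real.cos x)
        - (k : ℝ) ^ 2 * Real.tan x ^ 2 * u x
        = -(4 * n * ((n : ℝ) + k)) * u x) ∧
    IntegrableOn (fun x : ℝ => (u x) ^ 2 / Real.tan x)
      (Set.Ioo 0 (Real.pi / 2)) := by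
  obtain rfl : u = fun x => ∑ l ∈ range (n + 1), grushinCoeff k n l * cos x ^ (k + 2 * l) :=
    funext hu
  have hrec := fun j (hj : j < n) => grushinCoeff_succ_mul (k := k) hj
  have hsum : ∑ l ∈ range (n + 1), grushinCoeff k n l = 0 := by
    have h := sum_mul_pow_mul_one_sub (fun l => l * (l + k)) _ n (by simp) hrec 1
    simp only [sub_self, mul_zero, one_pow, mul_one, zero_eq_mul, neg_eq_zero] at h
    exact h.resolve_left (by positivity)
  refine ⟨fun x hx => ?_, integrableOn_sum_cos_pow_sq_div_tan k _ _ hsum⟩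
  have hs : 0 < sin x := sin_pos_of_pos_of_lt_pi hx.1 (by linarith [hx.2, pi_pos])
  have hc : 0 < cos x := cos_pos_of_mem_Ioo ⟨by linarith [hx.1, pi_pos], hx.2⟩
  exact grushinFiberLaplacian_sum_cos_pow k n _ hrec hs.ne' hc.ne'
end

section
/- Let β > 0 be a real number and n a positive integer. Define u : (0, π/2) → ℝ by u(x) = ∑_{ℓ=0}^{n} (−1)^ℓ · binom(n,ℓ) · (∏_{i=0}^{ℓ−1} (n+β+i)) / (∏_{i=0}^{ℓ−1} (β+1+i)) · cos(x)^{β+2ℓ}, where cos(x)^β = exp(β·log cos x). Then for every x ∈ (0, π/2) one has u''(x) − u'(x)/(sin x · cos x) − β²·tan²(x)·u(x) = −4n(n+β)·u(x). -/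
/-!
Since `sin² = 1 - cos²`, the operator `L f = f'' - f' / (sin x cos x) - β² tan² x · f` acts on a
single power of the cosine by `L (cos^p) = (p² - β²) (cos^(p-2) - cos^p)`. For `p = β + 2l` the
factor is `4l(l + β)`, and the coefficients of `F(-n, n+β; β+1; ·)` satisfy
`c_{l+1} (l+1)(l+1+β) = c_l (l-n)(l+n+β)`, which turns `L u` into a telescoping sum equal to
`-4n(n+β) u`.
-/

open Real Filter Topology Finset

noncomputable section

/-- The `k`-th Fourier fiber of the Aharonov–Bohm Grushin Laplacian, with `β = |k - b|`. -/
def grushinFiberOp (β : ℝ) (f : ℝ → ℝ) (x : ℝ) : ℝ :=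
  deriv (deriv f) x - deriv f x / (sin x * cos x) - β ^ 2 * tan x ^ 2 * f x

theorem grushinFiberOp_fun_sum {ι : Type*} (β : ℝ) (s : Finset ι) (c : ι → ℝ) {g : ι → ℝ → ℝ}
    {x : ℝ} (hg : ∀ i ∈ s, ContDiffAt ℝ 2 (g i) x) :
    grushinFiberOp β (fun y => ∑ i ∈ s, c i * g i y) x
      = ∑ i ∈ s, c i * grushinFiberOp β (g i) x := by
  have hdiff : ∀ᶠ y in 𝓝 x, ∀ i ∈ s, DifferentiableAt ℝ (g i) y :=
    (eventually_all_finset s).2 fun i hi =>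
      ((hg i hi).eventually (by simp)).mono fun y hy => hy.differentiableAt (by simp)
  have hderiv : deriv (fun y => ∑ i ∈ s, c i * g i y) =ᶠ[𝓝 x]
      fun y => ∑ i ∈ s, c i * deriv (g i) y := by
    filter_upwards [hdiff] with y hy
    rw [deriv_fun_sum fun i hi => (hy i hi).const_mul (c i)]
    exact sum_congr rfl fun i hi => deriv_const_mul _ (hy i hi)
  have hdiff' : ∀ i ∈ s, DifferentiableAt ℝ (deriv (g i)) x := fun i hi =>
    ((hg i hi).derivWithin (m := 1) (by norm_num)).differentiableAt (by simp)
  have hderiv2 : deriv (deriv fun y => ∑ i ∈ s, c i * g i y) x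
      = ∑ i ∈ s, c i * deriv (deriv (g i)) x := by
    rw [hderiv.deriv_eq, deriv_fun_sum fun i hi => (hdiff' i hi).const_mul (c i)]
    exact sum_congr rfl fun i hi => deriv_const_mul _ (hdiff' i hi)
  simp only [grushinFiberOp, hderiv2, hderiv.eq_of_nhds, mul_sub, sum_sub_distrib, sum_div,
    mul_sum, mul_div_assoc]
  exact congrArg _ (sum_congr rfl fun i _ => by ring)

theorem hasDerivAt_cos_rpow (p : ℝ) {x : ℝ} (hx : cos x ≠ 0) :
    HasDerivAt (fun y => cos y ^ p) (-(p * cos x ^ (p - 1) * sin x)) x := by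
  convert (hasDerivAt_cos x).rpow_const (p := p) (Or.inl hx) using 1
  ring

theorem grushinFiberOp_cos_rpow (β p : ℝ) {x : ℝ} (hc : cos x ≠ 0) (hs : sin x ≠ 0) :
    grushinFiberOp β (fun y => cos y ^ p) x = (p ^ 2 - β ^ 2) * (cos x ^ (p - 2) - cos x ^ p) := by
  have hderiv : deriv (fun y => cos y ^ p) =ᶠ[𝓝 x] fun y => -(p * cos y ^ (p - 1) * sin y) := by
    filter_upwards [isOpen_ne_fun continuous_cos continuous_const |>.mem_nhds hc] with y hy
    exact (hasDerivAt_cos_rpow p hy).deriv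
  have hderiv2 := (((hasDerivAt_cos_rpow (p - 1) hc).const_mul p).fun_mul (hasDerivAt_sin x)).fun_neg
  have h1 : cos x ^ (p - 1) = cos x ^ (p - 2) * cos x := by
    rw [← rpow_add_one hc]; ring_nf
  have h0 : cos x ^ p = cos x ^ (p - 2) * cos x ^ 2 := by
    rw [← rpow_add_natCast hc]; norm_num
  rw [grushinFiberOp, hderiv.deriv_eq, hderiv.eq_of_nhds, hderiv2.deriv]
  simp only [show p - 1 - 1 = p - 2 by ring, h1, h0, tan_eq_sin_div_cos]
  field_simp
  linear_combination (p ^ 2 - β ^ 2 - p) * cos x ^ (p - 2) * sin_sq_add_cos_sq x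

/-- The coefficient of `z ^ l` in the terminating series `F(-n, n + β; β + 1; z)`. -/
def hypergeomCoeff (β : ℝ) (n l : ℕ) : ℝ :=
  (-1 : ℝ) ^ l * (n.choose l) * (∏ i ∈ range l, ((n : ℝ) + β + i)) / (∏ i ∈ range l, (β + 1 + i))

theorem hypergeomCoeff_eq_zero {β : ℝ} {n l : ℕ} (h : n < l) : hypergeomCoeff β n l = 0 := by
  simp [hypergeomCoeff, Nat.choose_eq_zero_of_lt h]

theorem hypergeomCoeff_succ_mul {β : ℝ} {n l : ℕ} (hl : l ≤ n) (hβ : β + 1 + l ≠ 0) :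
    hypergeomCoeff β n (l + 1) * ((l + 1) * (l + 1 + β))
      = hypergeomCoeff β n l * ((l - n) * (l + n + β)) := by
  have hchoose : (n.choose (l + 1) : ℝ) * (l + 1) = n.choose l * (n - l) := by
    have := congrArg (Nat.cast : ℕ → ℝ) (Nat.choose_succ_right_eq n l)
    push_cast [Nat.cast_sub hl] at this
    exact this
  unfold hypergeomCoeff
  rw [prod_range_succ, prod_range_succ, div_eq_mul_inv, div_eq_mul_inv, mul_inv, pow_succ]
  generalize (∏ i ∈ range l, (β + 1 + (i : ℝ)))⁻¹ = q
  have hinv : (β + 1 + l)⁻¹ * ((l + 1) * (l + 1 + β)) = (l : ℝ) + 1 := by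
    field_simp; ring
  linear_combination (-(-1) ^ l * (∏ i ∈ range l, ((n : ℝ) + β + i)) * q * (n + β + l)) *
    ((n.choose (l + 1) : ℝ) * hinv + hchoose)

theorem sum_range_mul_sub_shift_eq {R : Type*} [CommRing R] {c a s t : ℕ → R} {μ : R} {N : ℕ}
    (hN : c N = 0) (ha : a 0 = 0) (hrec : ∀ l < N, c (l + 1) * a (l + 1) = c l * (a l - μ))
    (hst : ∀ l, s (l + 1) = t l) :
    ∑ l ∈ range N, c l * a l * (s l - t l) = -μ * ∑ l ∈ range N, c l * t l := by
  have hshift : ∑ l ∈ range N, c l * a l * s l = ∑ l ∈ range N, c l * (a l - μ) * t l :=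
    calc ∑ l ∈ range N, c l * a l * s l = ∑ l ∈ range (N + 1), c l * a l * s l := by
          rw [sum_range_succ, hN]; ring
      _ = _ := by
          rw [sum_range_succ', ha, mul_zero, zero_mul, add_zero]
          exact sum_congr rfl fun l hl => by rw [hrec l (mem_range.1 hl), hst]
  calc ∑ l ∈ range N, c l * a l * (s l - t l)
        = ∑ l ∈ range N, c l * (a l - μ) * t l - ∑ l ∈ range N, c l * a l * t l := by
          simp only [mul_sub, sum_sub_distrib, hshift]
    _ = -μ * ∑ l ∈ range N, c l * t l := by
          rw [mul_sum, ← sum_sub_distrib]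
          exact sum_congr rfl fun l _ => by ring

end

theorem grushin_sphere_ab_eigenfunction_general (β : ℝ) (hβ : 0 < β) (n : ℕ)
    (u : ℝ → ℝ)
    (hu : ∀ x : ℝ, u x = ∑ l ∈ Finset.range (n + 1),
      (-1 : ℝ) ^ l * (n.choose l) *
        (∏ i ∈ Finset.range l, ((n : ℝ) + β + i)) /
        (∏ i ∈ Finset.range l, (β + 1 + i)) *
        Real.cos x ^ (β + 2 * l) ) :
    ∀ x : ℝ, x ∈ Set.Ioo 0 (Real.pi / 2) →
      deriv (deriv u) x - deriv u x / (Real.sin x * Real.cos x)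
        - β ^ 2 * Real.tan x ^ 2 * u x
        = -(4 * n * ((n : ℝ) + β)) * u x := by
  have hu' : u = fun y => ∑ l ∈ range (n + 1), hypergeomCoeff β n l * cos y ^ (β + 2 * l) := by
    funext y; rw [hu]; rfl
  rintro x ⟨hx0, hx2⟩
  have hc : cos x ≠ 0 := (cos_pos_of_mem_Ioo ⟨by linarith [pi_pos], hx2⟩).ne'
  have hs : sin x ≠ 0 := (sin_pos_of_pos_of_lt_pi hx0 (by linarith [pi_pos])).ne'
  change grushinFiberOp β u x = _
  rw [hu', grushinFiberOp_fun_sum β _ _ (g := fun (l : ℕ) y => cos y ^ (β + 2 * (l : ℝ)))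
    fun l _ => (contDiffAt_rpow_const_of_ne hc).comp x contDiff_cos.contDiffAt]
  simp only [grushinFiberOp_cos_rpow β _ hc hs]
  rw [← sum_range_mul_sub_shift_eq (hypergeomCoeff_eq_zero (Nat.lt_succ_self n))
    (a := fun l => 4 * l * (l + β)) (s := fun l => cos x ^ (β + 2 * l - 2)) (by simp)
    (fun l hl => ?_) (fun l => by push_cast; ring_nf)]
  · exact sum_congr rfl fun l _ => by ring
  · have hrec := hypergeomCoeff_succ_mul (Nat.lt_succ_iff.1 hl) (by positivity : β + 1 + l ≠ 0)
    push_cast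
    linear_combination 4 * hrec

/-- Aharonov–Bohm Grushin sphere: for real `β > 0`, the terminating
hypergeometric function `u(x) = cos(x)^β · F(−n, n+β; β+1; cos²x)` (with real
powers `cos(x)^β = exp(β log cos x)`) satisfies the fiber eigenvalue equation
`u'' − u'/(sin x cos x) − β² tan²x · u = −4n(n+β)·u` on `(0, π/2)`. -/
theorem grushin_sphere_ab_eigenfunction (β : ℝ) (hβ : 0 < β) (n : ℕ) (hn : 0 < n)
    (u : ℝ → ℝ)
    (hu : ∀ x : ℝ, u x = ∑ l ∈ Finset.range (n + 1),
      (-1 : ℝ) ^ l * (n.choose l) *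
        (∏ i ∈ Finset.range l, ((n : ℝ) + β + i)) /
        (∏ i ∈ Finset.range l, (β + 1 + i)) *
        Real.cos x ^ (β + 2 * l) ) :
    ∀ x : ℝ, x ∈ Set.Ioo 0 (Real.pi / 2) →
      deriv (deriv u) x - deriv u x / (Real.sin x * Real.cos x)
        - β ^ 2 * Real.tan x ^ 2 * u x
        = -(4 * n * ((n : ℝ) + β)) * u x :=
  grushin_sphere_ab_eigenfunction_general β hβ n u hu
end

section
/- Let N(E) = #{(n,k) ∈ ℕ×ℤ : 4n(n+|k|) ≤ E}. Then, as E → +∞, N(E) = (E/4)·log E + (γ − log 2 − 1/2)·(E/2) + O(√E), where γ is the Euler–Mascheroni constant. -/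
/-!
Counting the pairs `(n, k)` column by column, `N(E) = ∑_{1 ≤ n ≤ M} (2⌊E/4n⌋ - 2n + 1)` with
`M = ⌊√E/2⌋`. Dropping the floors costs `O(M) = O(√E)`, and what remains is
`(E/2) H_M - M²`. Since `H_M = log M + γ + O(1/M)`, `log M = log (√E/2) + O(1/M)` and
`M² = E/4 + O(√E)`, each error term is `O(E/M) = O(√E)`.
-/

open Real Filter Asymptotics Finset

theorem Set.ncard_setOf_abs_le_eq_sum {α : Type*} (S : Finset α) (g : α → ℤ)
    (hg : ∀ a ∈ S, 0 ≤ g a) :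
    ({p : α × ℤ | p.1 ∈ S ∧ |p.2| ≤ g p.1}.ncard : ℤ) = ∑ a ∈ S, (2 * g a + 1) := by
  classical
  have hset : {p : α × ℤ | p.1 ∈ S ∧ |p.2| ≤ g p.1} =
      ↑(S.biUnion fun a => ({a} : Finset α) ×ˢ Finset.Icc (-g a) (g a)) := by
    ext ⟨a, k⟩
    simp only [Set.mem_ofPred_eq, Finset.mem_coe, Finset.mem_biUnion, Finset.mem_product,
      Finset.mem_singleton, Finset.mem_Icc, abs_le]
    exact ⟨fun ⟨ha, hk⟩ => ⟨a, ha, rfl, hk⟩, fun ⟨_, hb, rfl, hk⟩ => ⟨hb, hk⟩⟩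
  rw [hset, Set.ncard_coe_finset, card_biUnion]
  · push_cast
    refine sum_congr rfl fun a ha => ?_
    have hle : -g a ≤ g a + 1 := by linarith [hg a ha]
    rw [Finset.card_product, Finset.card_singleton, one_mul, Int.card_Icc_of_le _ _ hle]
    ring
  · intro a _ b _ hab
    simp only [Finset.disjoint_left, Finset.mem_product, Finset.mem_singleton]
    rintro _ ⟨rfl, _⟩ ⟨rfl, _⟩
    exact hab rfl

theorem Real.log_sub_log_le_div {x y : ℝ} (hx : 0 < x) (hy : 0 < y) :
    log x - log y ≤ (x - y) / y := by
  rw [← log_div hx.ne' hy.ne', sub_div, div_self hy.ne']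
  exact log_le_sub_one_of_pos (div_pos hx hy)

theorem abs_harmonic_sub_log_sub_eulerMascheroniConstant_le {M : ℕ} (hM : 0 < M) :
    |(harmonic M : ℝ) - log M - eulerMascheroniConstant| ≤ 1 / M := by
  have hupper := eulerMascheroniConstant_lt_eulerMascheroniSeq' M
  have hlower := eulerMascheroniSeq_lt_eulerMascheroniConstant M
  rw [eulerMascheroniSeq', if_neg hM.ne'] at hupper
  rw [eulerMascheroniSeq] at hlower
  have hM' : (0 : ℝ) < M := by exact_mod_cast hM
  have hlog := log_sub_log_le_div (by linarith : (0 : ℝ) < M + 1) hM'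
  rw [add_sub_cancel_left] at hlog
  rw [abs_le]
  constructor <;> linarith

theorem abs_log_sub_log_natFloor_le {x : ℝ} (hx : 1 ≤ x) :
    |log x - log ⌊x⌋₊| ≤ 1 / ⌊x⌋₊ := by
  have hM : (0 : ℝ) < ⌊x⌋₊ := by exact_mod_cast Nat.floor_pos.mpr hx
  have hle : (⌊x⌋₊ : ℝ) ≤ x := Nat.floor_le (by linarith)
  have hlt : x < ⌊x⌋₊ + 1 := Nat.lt_floor_add_one x
  rw [abs_of_nonneg (sub_nonneg.mpr (log_le_log hM hle))]
  calc log x - log ⌊x⌋₊ ≤ (x - ⌊x⌋₊) / ⌊x⌋₊ := log_sub_log_le_div (by linarith) hM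
    _ ≤ 1 / ⌊x⌋₊ := by gcongr; linarith

theorem abs_sq_sub_natFloor_sq_le {x : ℝ} (hx : 0 ≤ x) : |x ^ 2 - ⌊x⌋₊ ^ 2| ≤ 2 * x := by
  have hle : (⌊x⌋₊ : ℝ) ≤ x := Nat.floor_le hx
  have hlt : x < ⌊x⌋₊ + 1 := Nat.lt_floor_add_one x
  rw [abs_of_nonneg (by nlinarith [Nat.cast_nonneg (α := ℝ) ⌊x⌋₊])]
  nlinarith [Nat.cast_nonneg (α := ℝ) ⌊x⌋₊]

theorem sum_Icc_two_mul_sub_one (M : ℕ) : ∑ n ∈ Icc 1 M, (2 * (n : ℝ) - 1) = M ^ 2 := by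
  induction M with
  | zero => simp
  | succ m ih =>
    rw [sum_Icc_succ_top (by omega), ih]
    push_cast
    ring

namespace GrushinSphere

theorem le_iff_abs_le_floor_sub {E : ℝ} {n : ℕ} (hn : 0 < n) (k : ℤ) :
    4 * n * ((n : ℝ) + |(k : ℝ)|) ≤ E ↔ |k| ≤ ⌊E / (4 * n)⌋ - n := by
  rw [mul_comm, ← le_div_iff₀ (by positivity), le_sub_iff_add_le, Int.le_floor]
  push_cast
  rw [add_comm]

theorem le_natFloor_sqrt_div_two_iff {E : ℝ} {n : ℕ} (hn : 0 < n) :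
    n ≤ ⌊√E / 2⌋₊ ↔ 4 * n * (n : ℝ) ≤ E := by
  rw [Nat.le_floor_iff (by positivity), le_div_iff₀ two_pos, mul_comm,
    le_sqrt' (by positivity)]
  ring_nf

theorem ncard_eq_sum (E : ℝ) :
    ({p : ℕ × ℤ | 0 < p.1 ∧ 4 * p.1 * ((p.1 : ℝ) + |(p.2 : ℝ)|) ≤ E}.ncard : ℝ) =
      ∑ n ∈ Icc 1 ⌊√E / 2⌋₊, (2 * ((⌊E / (4 * n)⌋ - n : ℤ) : ℝ) + 1) := by
  have hset : {p : ℕ × ℤ | 0 < p.1 ∧ 4 * p.1 * ((p.1 : ℝ) + |(p.2 : ℝ)|) ≤ E} =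
      {p | p.1 ∈ Icc 1 ⌊√E / 2⌋₊ ∧ |p.2| ≤ ⌊E / (4 * p.1)⌋ - p.1} := by
    ext ⟨n, k⟩
    simp only [Set.mem_ofPred_eq, mem_Icc, Nat.one_le_iff_ne_zero, ← Nat.pos_iff_ne_zero]
    refine ⟨fun ⟨hn, hE⟩ => ⟨⟨hn, ?_⟩, (le_iff_abs_le_floor_sub hn k).mp hE⟩,
      fun ⟨⟨hn, _⟩, hk⟩ => ⟨hn, (le_iff_abs_le_floor_sub hn k).mpr hk⟩⟩
    rw [le_natFloor_sqrt_div_two_iff hn]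
    nlinarith [abs_nonneg (k : ℝ), (Nat.cast_pos.mpr hn : (0 : ℝ) < n)]
  have hnonneg : ∀ n ∈ Icc 1 ⌊√E / 2⌋₊, 0 ≤ ⌊E / (4 * n)⌋ - n := by
    intro n hn
    obtain ⟨hn1, hnM⟩ := mem_Icc.mp hn
    simpa using (le_iff_abs_le_floor_sub hn1 0).mp
      (by simpa using (le_natFloor_sqrt_div_two_iff hn1).mp hnM)
  rw [hset]
  exact_mod_cast Set.ncard_setOf_abs_le_eq_sum _ _ hnonneg

theorem abs_sum_sub_harmonic_le (E : ℝ) (M : ℕ) :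
    |∑ n ∈ Icc 1 M, (2 * ((⌊E / (4 * n)⌋ - n : ℤ) : ℝ) + 1) - (E / 2 * harmonic M - M ^ 2)|
      ≤ 2 * (M : ℝ) := by
  have hmain : E / 2 * harmonic M - M ^ 2 = ∑ n ∈ Icc 1 M, (2 * (E / (4 * n)) - (2 * n - 1)) := by
    rw [sum_sub_distrib, sum_Icc_two_mul_sub_one, harmonic_eq_sum_Icc, ← mul_sum]
    push_cast
    rw [mul_sum, mul_sum]
    congr 1
    refine sum_congr rfl fun n _ => ?_
    field_simp
    ring
  rw [hmain, ← sum_sub_distrib]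
  calc _ ≤ ∑ n ∈ Icc 1 M, |2 * ((⌊E / (4 * n)⌋ : ℝ) - E / (4 * n))| := by
        refine (abs_sum_le_sum_abs _ _).trans_eq (sum_congr rfl fun n _ => ?_)
        push_cast
        ring_nf
    _ ≤ ∑ _n ∈ Icc 1 M, (2 : ℝ) := by
        refine sum_le_sum fun n _ => ?_
        rw [← Int.self_sub_fract, sub_sub_cancel_left, abs_mul, abs_neg, abs_two,
          Int.abs_fract]
        linarith [Int.fract_lt_one (E / (4 * n))]
    _ = 2 * (M : ℝ) := by simp [mul_comm]

theorem abs_sum_sub_weyl_le {E : ℝ} (hE : 16 ≤ E) :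
    |∑ n ∈ Icc 1 ⌊√E / 2⌋₊, (2 * ((⌊E / (4 * n)⌋ - n : ℤ) : ℝ) + 1) -
      (E / 4 * log E + (eulerMascheroniConstant - log 2 - 1 / 2) * (E / 2))| ≤ 6 * √E := by
  set x := √E / 2
  set M := ⌊x⌋₊
  have hx : 2 ≤ x := by
    rw [le_div_iff₀ two_pos, le_sqrt' (by norm_num)]
    linarith
  have hEx : E = 4 * x ^ 2 := by
    rw [div_pow, sq_sqrt (by linarith)]
    ring
  have hM : 0 < M := Nat.floor_pos.mpr (by linarith)
  have hxM : x ≤ 2 * M := by linarith [Nat.lt_floor_add_one x]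
  have hlogE : log E = 2 * log x + 2 * log 2 := by
    rw [hEx, log_mul (by norm_num) (by positivity), log_pow,
      show (4 : ℝ) = 2 ^ 2 by norm_num, log_pow]
    push_cast
    ring
  have hscale : ∀ t : ℝ, |t| ≤ 1 / M → |E / 2 * t| ≤ 4 * x := by
    intro t ht
    rw [abs_mul, abs_of_nonneg (by positivity)]
    calc E / 2 * |t| ≤ E / 2 * (1 / M) := by gcongr
      _ ≤ 4 * x := by
        rw [mul_one_div, div_le_iff₀ (by exact_mod_cast hM), hEx]
        nlinarith
  have hfloor := abs_sum_sub_harmonic_le E M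
  have hharm := hscale _ (abs_harmonic_sub_log_sub_eulerMascheroniConstant_le hM)
  have hlog : |E / 2 * (log x - log M)| ≤ 4 * x :=
    hscale _ (abs_log_sub_log_natFloor_le (by linarith))
  have hsq : |x ^ 2 - M ^ 2| ≤ 2 * x := abs_sq_sub_natFloor_sq_le (by linarith)
  -- the error is the floor error + (E/2)(H_M - log M - γ) - (E/2)(log x - log M) + (x² - M²)
  rw [hlogE, show √E = 2 * x by ring]
  rw [abs_le] at hfloor hharm hlog hsq ⊢
  constructor <;> linarith [Nat.floor_le (by linarith : 0 ≤ x)]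

end GrushinSphere

/-- Weyl's law with remainder for the Grushin sphere: as `E → +∞`,
`N(E) = (E/4)·log E + (γ − log 2 − 1/2)·(E/2) + O(√E)`, where `γ` is the
Euler–Mascheroni constant. -/
theorem grushin_sphere_weyl_law
    (N : ℝ → ℝ)
    (hN : ∀ E : ℝ, N E =
      Set.ncard {p : ℕ × ℤ | 0 < p.1 ∧ (4 * p.1 * ((p.1 : ℝ) + |(p.2 : ℝ)|) ≤ E)}) :
    (fun E : ℝ => N E - (E / 4 * Real.log E +
        (Real.eulerMascheroniConstant - Real.log 2 - 1 / 2) * (E / 2)))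
      =O[atTop] (fun E : ℝ => Real.sqrt E) := by
  refine isBigO_iff.mpr ⟨6, ?_⟩
  filter_upwards [eventually_ge_atTop 16] with E hE
  rw [hN, GrushinSphere.ncard_eq_sum, norm_eq_abs, norm_of_nonneg (sqrt_nonneg E)]
  exact GrushinSphere.abs_sum_sub_weyl_le hE
end

section
/- There exists a constant C > 0 such that for every real b with 0 < |b| < 1/2 and every real E ≥ 2, |N_b(E) − E/(4|b|) − (E/2)·log E| ≤ C·E, where N_b(E) = #{(n,k) ∈ ℕ×ℤ : 4n|k−b| ≤ E}. In particular, for fixed non-integer flux b (with nearest integer 0) the eigenvalue counting function grows like (E/2)log E + E/(4|b|), and the coefficient of E blows up as b approaches the integer 0. -/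
/-!
Counting the lattice points fibre by fibre, `N_b(E) = ∑_k ⌊E / (4|k - b|)⌋₊`, where only
`|k| ≤ E` contribute. Dropping the floors costs at most the number of fibres, `O(E)`. The fibre
`k = 0` gives `E / (4|b|)`; the fibres `±j` together give `(E/2) / j` up to replacing `j` by
`j ± 1/2`, and the harmonic bounds turn their sum into `(E/2) log E + O(E)`.
-/

open Real Finset

lemma sum_Icc_neg_eq_add_sum_range {G : Type*} [AddCommGroup G] (f : ℤ → G) (M : ℕ) :
    ∑ k ∈ Icc (-(M : ℤ)) M, f k = f 0 + ∑ i ∈ range M, (f (i + 1) + f (-(i + 1))) := by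
  induction M with
  | zero => simp
  | succ M ih =>
    rw [Nat.cast_succ, sum_Icc_succ_eq_add_endpoints, ih, sum_range_succ]
    abel

lemma abs_sum_natFloor_sub_sum_le {ι : Type*} (s : Finset ι) (x : ι → ℝ)
    (hx : ∀ i ∈ s, 0 ≤ x i) : |∑ i ∈ s, (⌊x i⌋₊ : ℝ) - ∑ i ∈ s, x i| ≤ #s := by
  rw [← sum_sub_distrib]
  refine (abs_sum_le_sum_abs _ _).trans ?_
  refine (sum_le_card_nsmul s _ 1 fun i hi => ?_).trans (by simp)
  rw [abs_sub_comm, abs_of_nonneg (sub_nonneg.2 (Nat.floor_le (hx i hi)))]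
  linarith [Nat.lt_floor_add_one (x i)]

lemma mem_Icc_one_floor_div_iff {n : ℕ} {c y : ℝ} (hc : 0 < c) :
    n ∈ Icc 1 ⌊y / c⌋₊ ↔ 0 < n ∧ n * c ≤ y := by
  rw [mem_Icc, Nat.one_le_iff_ne_zero, ← le_div_iff₀ hc, Nat.pos_iff_ne_zero]
  exact and_congr_right Nat.le_floor_iff'

lemma ncard_eq_sum_card_of_mem_iff {α β : Type*} {S : Set (α × β)} (t : Finset β)
    (F : β → Finset α) (hS : ∀ a b, (a, b) ∈ S ↔ b ∈ t ∧ a ∈ F b) :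
    S.ncard = ∑ b ∈ t, #(F b) := by
  have hS' : S = (fun x : (_ : β) × α => (x.2, x.1)) '' ↑(t.sigma F) := by
    ext ⟨a, b⟩
    simp [hS]
  rw [hS', Set.ncard_image_of_injective _ fun x y h =>
    Sigma.ext (congrArg Prod.snd h) (heq_of_eq (congrArg Prod.fst h)),
    Set.ncard_coe_finset, card_sigma]

lemma inv_abs_sub_le_inv_sub {t b β : ℝ} (hb : |b| ≤ β) (ht : β < t) :
    |t - b|⁻¹ ≤ (t - β)⁻¹ := by
  refine inv_anti₀ (by linarith) ?_
  linarith [abs_sub_abs_le_abs_sub t b, le_abs_self t]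

lemma inv_add_le_inv_abs_sub {t b β : ℝ} (hb : |b| ≤ β) (ht : |b| < t) :
    (t + β)⁻¹ ≤ |t - b|⁻¹ := by
  refine inv_anti₀ ?_ ?_
  · linarith [abs_sub_abs_le_abs_sub t b, le_abs_self t]
  · linarith [abs_sub t b, abs_of_pos (show 0 < t by linarith [abs_nonneg b])]

lemma harmonic_eq_sum_range (n : ℕ) : (harmonic n : ℝ) = ∑ i ∈ range n, ((i : ℝ) + 1)⁻¹ := by
  simp [harmonic]

lemma sum_range_inv_add_half_le_two_add_harmonic (n : ℕ) :
    ∑ i ∈ range n, ((i : ℝ) + 1 / 2)⁻¹ ≤ 2 + harmonic n := by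
  cases n with
  | zero => simp
  | succ n =>
    rw [sum_range_succ', harmonic_eq_sum_range, sum_range_succ]
    have hshift : ∑ i ∈ range n, (((i + 1 : ℕ) : ℝ) + 1 / 2)⁻¹ ≤ ∑ i ∈ range n, ((i : ℝ) + 1)⁻¹ :=
      sum_le_sum fun i _ => inv_anti₀ (by positivity) (by push_cast; linarith)
    have hlast : (0 : ℝ) ≤ ((n : ℝ) + 1)⁻¹ := by positivity
    have h0 : (((0 : ℕ) : ℝ) + 1 / 2)⁻¹ = 2 := by norm_num
    linarith

lemma harmonic_le_one_add_sum_range_inv_add_three_halves (n : ℕ) :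
    (harmonic n : ℝ) ≤ 1 + ∑ i ∈ range n, ((i : ℝ) + 3 / 2)⁻¹ := by
  cases n with
  | zero => simp
  | succ n =>
    rw [harmonic_eq_sum_range, sum_range_succ', sum_range_succ]
    have hshift : ∑ i ∈ range n, (((i + 1 : ℕ) : ℝ) + 1)⁻¹ ≤ ∑ i ∈ range n, ((i : ℝ) + 3 / 2)⁻¹ :=
      sum_le_sum fun i _ => inv_anti₀ (by positivity) (by push_cast; linarith)
    have hlast : (0 : ℝ) ≤ ((n : ℝ) + 3 / 2)⁻¹ := by positivity
    have h0 : (((0 : ℕ) : ℝ) + 1)⁻¹ = 1 := by norm_num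
    linarith

lemma abs_sum_inv_abs_sub_add_inv_abs_add_sub_two_log_le {b y : ℝ} (hb : |b| ≤ 1 / 2)
    (hy : 1 ≤ y) :
    |∑ i ∈ range ⌊y⌋₊, (|(i : ℝ) + 1 - b|⁻¹ + |(i : ℝ) + 1 + b|⁻¹) - 2 * log y| ≤ 6 := by
  have hb' : |-b| ≤ 1 / 2 := by rwa [abs_neg]
  have upper : ∑ i ∈ range ⌊y⌋₊, (|(i : ℝ) + 1 - b|⁻¹ + |(i : ℝ) + 1 + b|⁻¹)
      ≤ 2 * ∑ i ∈ range ⌊y⌋₊, ((i : ℝ) + 1 / 2)⁻¹ := by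
    rw [mul_sum]
    refine sum_le_sum fun i _ => ?_
    have hi : (1 / 2 : ℝ) < i + 1 := by linarith [(i.cast_nonneg : (0 : ℝ) ≤ i)]
    have h₁ := inv_abs_sub_le_inv_sub hb hi
    have h₂ := inv_abs_sub_le_inv_sub hb' hi
    rw [sub_neg_eq_add] at h₂
    rw [show (i : ℝ) + 1 - 1 / 2 = i + 1 / 2 by ring] at h₁ h₂
    linarith
  have lower : 2 * ∑ i ∈ range ⌊y⌋₊, ((i : ℝ) + 3 / 2)⁻¹
      ≤ ∑ i ∈ range ⌊y⌋₊, (|(i : ℝ) + 1 - b|⁻¹ + |(i : ℝ) + 1 + b|⁻¹) := by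
    rw [mul_sum]
    refine sum_le_sum fun i _ => ?_
    have hi : (1 / 2 : ℝ) < i + 1 := by linarith [(i.cast_nonneg : (0 : ℝ) ≤ i)]
    have h₁ := inv_add_le_inv_abs_sub hb (hb.trans_lt hi)
    have h₂ := inv_add_le_inv_abs_sub hb' (hb'.trans_lt hi)
    rw [sub_neg_eq_add] at h₂
    rw [show (i : ℝ) + 1 + 1 / 2 = i + 3 / 2 by ring] at h₁ h₂
    linarith
  have h_half := sum_range_inv_add_half_le_two_add_harmonic ⌊y⌋₊
  have h_three_halves := harmonic_le_one_add_sum_range_inv_add_three_halves ⌊y⌋₊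
  have h_log_le := log_le_harmonic_floor y (by linarith)
  have h_le_log := harmonic_floor_le_one_add_log y hy
  rw [abs_le]
  constructor <;> linarith

lemma sum_Icc_div_abs_sub (b E : ℝ) (M : ℕ) :
    ∑ k ∈ Icc (-(M : ℤ)) M, E / (4 * |(k : ℝ) - b|)
      = E / (4 * |b|) + E / 4 * ∑ i ∈ range M, (|(i : ℝ) + 1 - b|⁻¹ + |(i : ℝ) + 1 + b|⁻¹) := by
  rw [sum_Icc_neg_eq_add_sum_range, mul_sum]
  congr 1
  · simp
  · refine sum_congr rfl fun i _ => ?_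
    rw [show ((-((i : ℤ) + 1) : ℤ) : ℝ) - b = -((i : ℝ) + 1 + b) by push_cast; ring, abs_neg]
    push_cast
    ring

lemma ncard_eq_sum_natFloor {b E : ℝ} (hb₀ : 0 < |b|) (hb : |b| ≤ 1 / 2) (hE : 2 ≤ E) :
    {p : ℕ × ℤ | 0 < p.1 ∧ 4 * p.1 * |(p.2 : ℝ) - b| ≤ E}.ncard
      = ∑ k ∈ Icc (-(⌊E⌋₊ : ℤ)) ⌊E⌋₊, ⌊E / (4 * |(k : ℝ) - b|)⌋₊ := by
  refine (ncard_eq_sum_card_of_mem_iff (Icc (-(⌊E⌋₊ : ℤ)) ⌊E⌋₊)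
    (fun k : ℤ => Icc 1 ⌊E / (4 * |(k : ℝ) - b|)⌋₊) ?_).trans (by simp)
  intro n k
  have hkb : 0 < |(k : ℝ) - b| := by
    rcases eq_or_ne k 0 with rfl | hk
    · simpa using hb₀
    · have : (1 : ℝ) ≤ |(k : ℝ)| := by exact_mod_cast Int.one_le_abs hk
      linarith [abs_sub_abs_le_abs_sub (k : ℝ) b]
  simp only [Set.mem_ofPred_eq, mem_Icc_one_floor_div_iff (by positivity : 0 < 4 * |(k : ℝ) - b|),
    mul_left_comm _ (4 : ℝ), ← mul_assoc, mem_Icc, ← abs_le, iff_and_self]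
  rintro ⟨hn, hle⟩
  have hn' : (1 : ℝ) ≤ n := by exact_mod_cast hn
  -- `|k| ≤ |k - b| + |b| ≤ E / 4 + 1 / 2`, which is below `E - 1 < ⌊E⌋₊` because `E ≥ 2`.
  have hk : |(k : ℝ)| ≤ ⌊E⌋₊ := by
    linarith [abs_sub_abs_le_abs_sub (k : ℝ) b, Nat.sub_one_lt_floor E,
      mul_le_mul_of_nonneg_right hn' (abs_nonneg ((k : ℝ) - b))]
  exact_mod_cast hk

/-- Weyl's law for the Aharonov–Bohm Laplacian on the Grushin cylinder with
non-integer flux `b` (nearest integer `0`): there is `C > 0` such that for all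
`0 < |b| < 1/2` and all `E ≥ 2`,
`|N_b(E) − E/(4|b|) − (E/2)·log E| ≤ C·E`, where
`N_b(E) = #{(n,k) : 4n|k−b| ≤ E}`. The coefficient of `E` blows up as `b → 0`. -/
theorem grushin_cylinder_ab_weyl_law :
    ∃ C : ℝ, 0 < C ∧ ∀ b : ℝ, 0 < |b| → |b| < 1 / 2 → ∀ E : ℝ, 2 ≤ E →
      |(Set.ncard {p : ℕ × ℤ | 0 < p.1 ∧ (4 * p.1 * |(p.2 : ℝ) - b| ≤ E)} : ℝ)
        - E / (4 * |b|) - E / 2 * Real.log E| ≤ C * E := by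
  refine ⟨4, by norm_num, fun b hb₀ hb E hE => ?_⟩
  have hfloor := abs_sum_natFloor_sub_sum_le (Icc (-(⌊E⌋₊ : ℤ)) ⌊E⌋₊)
    (fun k => E / (4 * |(k : ℝ) - b|)) fun k _ => by positivity
  have htail := abs_sum_inv_abs_sub_add_inv_abs_add_sub_two_log_le hb.le (by linarith : 1 ≤ E)
  have hcard : (#(Icc (-(⌊E⌋₊ : ℤ)) ⌊E⌋₊) : ℝ) ≤ 2 * E + 1 := by
    rw [Int.card_Icc, show ((⌊E⌋₊ : ℤ) + 1 - -⌊E⌋₊).toNat = 2 * ⌊E⌋₊ + 1 by omega]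
    push_cast
    linarith [Nat.floor_le (by linarith : (0 : ℝ) ≤ E)]
  rw [ncard_eq_sum_natFloor hb₀ hb.le hE, Nat.cast_sum]
  rw [sum_Icc_div_abs_sub] at hfloor
  obtain ⟨hfloor₁, hfloor₂⟩ := abs_le.1 (hfloor.trans hcard)
  obtain ⟨htail₁, htail₂⟩ := abs_le.1 htail
  rw [abs_le]
  constructor <;> nlinarith
end

section
/- Let b be a real number. (i) If b is irrational, then the map from ℕ×ℤ to ℝ sending (n,k) to 4n(n+|k−b|) is injective (the spectrum of the Aharonov–Bohm Laplacian on the Grushin sphere is simple). (ii) If b is rational, then for every real number λ the set {(n,k) ∈ ℕ×ℤ : 4n(n+|k−b|) = λ} is finite (the spectrum is finitely degenerate). -/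
open Real

/-!
Write `|k - b| = σ (k - b)` with `σ = ±1`. Then `4n(n + |k - b|) = -4nσ · b + 4n(n + σk)` is an
integral affine function of `b`, and for irrational `b` the integer coefficients of such an
expression are determined by its value: `-4nσ` recovers `n` (as its absolute value) and `σ`, and
then `4n(n + σk)` recovers `k`. Finiteness holds for every `b`, since the eigenvalue dominates
both `n` and `|k - b|` once `n ≥ 1`.
-/

noncomputable def abEigenvalue (b : ℝ) (n : ℕ) (k : ℤ) : ℝ :=
  4 * n * (n + |k - b|)

theorem exists_abs_eq_intCast_mul {R : Type*} [Ring R] [LinearOrder R] [IsOrderedRing R]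
    (x : R) : ∃ σ : ℤ, |σ| = 1 ∧ |x| = σ * x := by
  rcases abs_cases x with ⟨hx, -⟩ | ⟨hx, -⟩
  · exact ⟨1, rfl, by simp [hx]⟩
  · exact ⟨-1, rfl, by simp [hx]⟩

theorem Irrational.eq_and_eq_of_intCast_mul_add_eq {b : ℝ} (hb : Irrational b) {a a' c c' : ℤ}
    (h : a * b + c = a' * b + c') : a = a' ∧ c = c' := by
  have ha : a = a' := by
    by_contra hne
    apply (hb.intCast_mul (sub_ne_zero.2 hne)).ne_int (c' - c)
    push_cast
    linear_combination h
  subst ha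
  exact ⟨rfl, by exact_mod_cast add_left_cancel h⟩

theorem abEigenvalue_eq_intCast_mul_add {b : ℝ} {n : ℕ} {k σ : ℤ}
    (hσ : |(k : ℝ) - b| = σ * (k - b)) :
    abEigenvalue b n k = ((-4 * n * σ : ℤ) : ℝ) * b + ((4 * n * (n + σ * k) : ℤ) : ℝ) := by
  rw [abEigenvalue, hσ]
  push_cast
  ring

theorem Irrational.eq_and_eq_of_abEigenvalue_eq {b : ℝ} (hb : Irrational b) {n n' : ℕ}
    {k k' : ℤ} (hn : 0 < n) (h : abEigenvalue b n k = abEigenvalue b n' k') :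
    n = n' ∧ k = k' := by
  obtain ⟨σ, hσ, hσk⟩ := exists_abs_eq_intCast_mul ((k : ℝ) - b)
  obtain ⟨σ', hσ', hσk'⟩ := exists_abs_eq_intCast_mul ((k' : ℝ) - b)
  rw [abEigenvalue_eq_intCast_mul_add hσk, abEigenvalue_eq_intCast_mul_add hσk'] at h
  obtain ⟨hslope, hconst⟩ := hb.eq_and_eq_of_intCast_mul_add_eq h
  have hnn : (n : ℤ) = n' := by
    simpa [abs_mul, hσ, hσ'] using congrArg abs hslope
  obtain rfl : n = n' := by exact_mod_cast hnn
  have hσσ : σ = σ' := mul_left_cancel₀ (by positivity) hslope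
  subst hσσ
  have hσ0 : σ ≠ 0 := by rintro rfl; simp at hσ
  exact ⟨rfl, mul_left_cancel₀ hσ0 (add_left_cancel (mul_left_cancel₀ (by positivity) hconst))⟩

theorem natCast_le_abEigenvalue (b : ℝ) {n : ℕ} (hn : 0 < n) (k : ℤ) :
    (n : ℝ) ≤ abEigenvalue b n k := by
  have hn1 : (1 : ℝ) ≤ n := by exact_mod_cast hn
  have := abs_nonneg ((k : ℝ) - b)
  rw [abEigenvalue]
  nlinarith

theorem abs_sub_le_abEigenvalue (b : ℝ) {n : ℕ} (hn : 0 < n) (k : ℤ) :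
    |(k : ℝ) - b| ≤ abEigenvalue b n k := by
  have hn1 : (1 : ℝ) ≤ n := by exact_mod_cast hn
  have := abs_nonneg ((k : ℝ) - b)
  rw [abEigenvalue]
  nlinarith

theorem finite_setOf_abEigenvalue_eq (b lam : ℝ) :
    {p : ℕ × ℤ | 0 < p.1 ∧ abEigenvalue b p.1 p.2 = lam}.Finite := by
  refine ((Set.finite_Iic ⌊lam⌋₊).prod (Set.finite_Icc ⌈b - lam⌉ ⌊b + lam⌋)).subset ?_
  rintro ⟨n, k⟩ ⟨hn, rfl⟩
  have hk := abs_sub_le_iff.1 (abs_sub_le_abEigenvalue b hn k)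
  refine ⟨Nat.le_floor (natCast_le_abEigenvalue b hn k), Int.ceil_le.2 ?_, Int.le_floor.2 ?_⟩
  all_goals linarith

/-- Degeneracy of the spectrum of the Aharonov–Bohm Laplacian on the Grushin
sphere: (i) for irrational flux `b` the map `(n,k) ↦ 4n(n+|k−b|)` is injective
(the spectrum is simple); (ii) for rational flux `b` every eigenvalue has
finite multiplicity (the spectrum is finitely degenerate). -/
theorem grushin_sphere_ab_degeneracy (b : ℝ) :
    (Irrational b →
      ∀ (n n' : ℕ) (k k' : ℤ), 0 < n → 0 < n' →
        4 * n * ((n : ℝ) + |(k : ℝ) - b|) = 4 * n' * ((n' : ℝ) + |(k' : ℝ) - b|) →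
        n = n' ∧ k = k') ∧
    (∀ q : ℚ, b = (q : ℝ) → ∀ lam : ℝ,
      Set.Finite {p : ℕ × ℤ | 0 < p.1 ∧
        4 * p.1 * ((p.1 : ℝ) + |(p.2 : ℝ) - b|) = lam}) :=
  ⟨fun hb _ _ _ _ hn _ h => hb.eq_and_eq_of_abEigenvalue_eq hn h,
    fun _ _ lam => finite_setOf_abEigenvalue_eq b lam⟩
end
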